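/- arXiv:2107.03692 — 6 statements merged into one kernel-verified Lean document; each statement's English description precedes it below -/
import Mathlib

section
/- Under regularity assumptions (A1)-(A4) on a parametrized IFS (maps $C^{2+\delta}$ in $x$, $C^{1+\delta}$ in $\lambda$, mixed second partials continuous and bounded, uniform hyperbolicity $0<\gamma_1\le|\partial_x f^\lambda_j|\le\gamma_2<1$), the following three transversality conditions are equivalent: (1) there is $\eta>0$ such that for all $u,v\in\Omega$ with $u_1\ne v_1$ and all $\lambda\in\overline{U}$, $|\Pi^\lambda(u)-\Pi^\lambda(v)|\le\eta$ implies $|\tfrac{d}{d\lambda}(\Pi^\lambda(u)-\Pi^\lambda(v))|\ge\eta$; (2) there is $\eta>0$ such that $\Pi^\lambda(u)=\Pi^\lambda(v)$ implies $|\tfrac{d}{d\lambda}(\Pi^\lambda(u)-\Pi^\lambda(v))|\ge\eta$; (3) there is $C_T>0$ such that for all such $u,v$ and all $r>0$, $\mathcal{L}^1\{\lambda\in\overline{U}: |\Pi^\lambda(u)-\Pi^\lambda(v)|\le r\}\le C_T r$. -/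
open Set Filter Topology MeasureTheory


/-- Mean-value lower bound on an interval. -/
lemma aux_slope_ge {g g' : ℝ → ℝ} {c d C : ℝ}
    (hd : ∀ t ∈ Set.Icc c d, HasDerivAt g (g' t) t)
    (hC : ∀ t ∈ Set.Icc c d, C ≤ g' t) :
    ∀ x ∈ Set.Icc c d, ∀ y ∈ Set.Icc c d, x ≤ y → C * (y - x) ≤ g y - g x := by
  refine Convex.mul_sub_le_image_sub_of_le_deriv (convex_Icc c d)
    (fun t ht => (hd t ht).continuousAt.continuousWithinAt)
    (fun t ht => ((hd t (interior_subset ht)).differentiableAt).differentiableWithinAt)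
    (fun t ht => ?_)
  rw [(hd t (interior_subset ht)).deriv]
  exact hC t (interior_subset ht)

/-- If `g' ≥ η/2` on an interval, points where `|g| ≤ r` are within `4r/η` of each other. -/
lemma aux_diam {g g' : ℝ → ℝ} {c d η r : ℝ} (hη : 0 < η)
    (hd : ∀ t ∈ Set.Icc c d, HasDerivAt g (g' t) t)
    (hlow : ∀ t ∈ Set.Icc c d, η / 2 ≤ g' t)
    {x y : ℝ} (hx : x ∈ Set.Icc c d) (hy : y ∈ Set.Icc c d)
    (hgx : |g x| ≤ r) (hgy : |g y| ≤ r) : |x - y| ≤ 4 * r / η := by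
  have key : ∀ p ∈ Set.Icc c d, ∀ q ∈ Set.Icc c d, p ≤ q → |g p| ≤ r → |g q| ≤ r →
      q - p ≤ 4 * r / η := by
    intro p hp q hq hpq hgp hgq
    have h1 := aux_slope_ge hd hlow p hp q hq hpq
    have h2 : g q - g p ≤ 2 * r := by
      have := abs_le.1 hgp; have := abs_le.1 hgq; linarith
    rw [le_div_iff₀ hη]
    nlinarith
  rcases le_total x y with h | h
  · rw [abs_sub_comm, abs_of_nonneg (by linarith)]; exact key x hx y hy h hgx hgy
  · rw [abs_of_nonneg (by linarith)]; exact key y hy x hx h hgy hgx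

/-- Covering of `[a, a + Nℓ]` by `N` intervals of length `ℓ`. -/
lemma aux_cover {a ℓ : ℝ} (hℓ : 0 < ℓ) {N : ℕ} (hN : 1 ≤ N) :
    Set.Icc a (a + N * ℓ) ⊆
      ⋃ k ∈ Finset.range N, Set.Icc (a + k * ℓ) (a + (k + 1) * ℓ) := by
  intro t ht
  obtain ⟨ht1, ht2⟩ := ht
  set k : ℕ := min (N - 1) ⌊(t - a) / ℓ⌋₊ with hk
  have hkN : k < N := lt_of_le_of_lt (min_le_left _ _) (by omega)
  refine Set.mem_iUnion₂.2 ⟨k, Finset.mem_range.2 hkN, ?_, ?_⟩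
  · have h1 : (k : ℝ) ≤ ⌊(t - a) / ℓ⌋₊ := by exact_mod_cast min_le_right _ _
    have h2 : (⌊(t - a) / ℓ⌋₊ : ℝ) ≤ (t - a) / ℓ := Nat.floor_le (div_nonneg (by linarith) hℓ.le)
    have : (k : ℝ) * ℓ ≤ t - a := by
      calc (k : ℝ) * ℓ ≤ ((t - a) / ℓ) * ℓ := by
            apply mul_le_mul_of_nonneg_right (h1.trans h2) hℓ.le
        _ = t - a := div_mul_cancel₀ _ hℓ.ne'
    linarith
  · rcases le_or_gt (N - 1 : ℕ) ⌊(t - a) / ℓ⌋₊ with h | h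
    · have hkeq : k = N - 1 := min_eq_left h
      have : ((k : ℝ) + 1) = N := by rw [hkeq]; push_cast [Nat.cast_sub hN]; ring
      rw [this] at *; linarith [this]
    · have hkeq : k = ⌊(t - a) / ℓ⌋₊ := min_eq_right h.le
      have h3 : (t - a) / ℓ < ⌊(t - a) / ℓ⌋₊ + 1 := Nat.lt_floor_add_one _
      have : t - a < ((k : ℝ) + 1) * ℓ := by
        rw [hkeq]
        calc t - a = ((t - a) / ℓ) * ℓ := (div_mul_cancel₀ _ hℓ.ne').symm
          _ < ((⌊(t - a) / ℓ⌋₊ : ℝ) + 1) * ℓ := by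
              apply mul_lt_mul_of_pos_right h3 hℓ
      linarith


/-- Key quantitative step: (T1)-type transversality for a single function `g` with
Hölder derivative gives the uniform measure bound, with a constant depending only on
`a b η Cδ δ`. -/
lemma aux_measure_bound {a b : ℝ} (hab : a < b) {η Cδ δ : ℝ}
    (hη : 0 < η) (hδ : 0 < δ) (hCδ : 0 < Cδ) :
    ∃ C_T > 0, ∀ g g' : ℝ → ℝ,
      (∀ t ∈ Set.Icc a b, HasDerivAt g (g' t) t) →
      (∀ s ∈ Set.Icc a b, ∀ t ∈ Set.Icc a b, |g' s - g' t| ≤ Cδ * |s - t| ^ δ) →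
      (∀ t ∈ Set.Icc a b, |g t| ≤ η → η ≤ |g' t|) →
      ∀ r : ℝ, 0 < r →
        volume {t ∈ Set.Icc a b | |g t| ≤ r} ≤ ENNReal.ofReal (C_T * r) := by
  set ρ : ℝ := (η / (2 * Cδ)) ^ (δ⁻¹) with hρdef
  have hρ : 0 < ρ := Real.rpow_pos_of_pos (by positivity) _
  have hρδ : Cδ * ρ ^ δ = η / 2 := by
    rw [hρdef, Real.rpow_inv_rpow (by positivity) hδ.ne']
    field_simp
  set N : ℕ := ⌈(b - a) / ρ⌉₊ with hNdef
  have hN1 : 1 ≤ N := Nat.one_le_iff_ne_zero.2 (by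
    simp only [hNdef, ne_eq, Nat.ceil_eq_zero, not_le]
    exact div_pos (by linarith) hρ)
  set ℓ : ℝ := (b - a) / N with hℓdef
  have hNpos : (0:ℝ) < N := by exact_mod_cast hN1
  have hℓ : 0 < ℓ := div_pos (by linarith) hNpos
  have hℓρ : ℓ ≤ ρ := by
    rw [hℓdef, div_le_iff₀ hNpos, mul_comm]
    calc b - a = ((b - a) / ρ) * ρ := (div_mul_cancel₀ _ hρ.ne').symm
      _ ≤ (N : ℝ) * ρ := by
          apply mul_le_mul_of_nonneg_right (Nat.le_ceil _) hρ.le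
  set C_T : ℝ := (b - a) / η + (N : ℝ) * (8 / η) with hCT
  refine ⟨C_T, add_pos (div_pos (by linarith) hη) (by positivity), ?_⟩
  intro g g' hd hH hT1 r hr
  set S : Set ℝ := {t ∈ Set.Icc a b | |g t| ≤ r} with hS
  rcases le_or_gt r η with hrη | hrη
  · -- partition case
    have hb : a + (N : ℝ) * ℓ = b := by rw [hℓdef]; field_simp; ring
    have hcover : S ⊆ ⋃ k ∈ Finset.range N, Set.Icc (a + k * ℓ) (a + (k + 1) * ℓ) := by
      intro t ht
      exact aux_cover hℓ hN1 (by rw [hb]; exact ht.1)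
    have hkey : ∀ k ∈ Finset.range N,
        volume (S ∩ Set.Icc (a + k * ℓ) (a + (k + 1) * ℓ)) ≤ ENNReal.ofReal (8 * r / η) := by
      intro k hk
      set I : Set ℝ := Set.Icc (a + k * ℓ) (a + (k + 1) * ℓ) with hI
      have hIab : I ⊆ Set.Icc a b := by
        apply Set.Icc_subset_Icc
        · nlinarith [Nat.cast_nonneg (α := ℝ) k]
        · have hk' : (k : ℝ) + 1 ≤ N := by
            have := Finset.mem_range.1 hk
            exact_mod_cast Nat.succ_le_of_lt this
          nlinarith
      rcases Set.eq_empty_or_nonempty (S ∩ I) with he | ⟨x₀, hx₀S, hx₀I⟩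
      · rw [he]; simp
      have hx₀ab : x₀ ∈ Set.Icc a b := hx₀S.1
      have hgx₀ : |g x₀| ≤ r := hx₀S.2
      have hT1x₀ : η ≤ |g' x₀| := hT1 x₀ hx₀ab (le_trans hgx₀ hrη)
      -- Hölder bound on I
      have hclose : ∀ t ∈ I, |g' t - g' x₀| ≤ η / 2 := by
        intro t ht
        have h1 : |t - x₀| ≤ ℓ := by
          obtain ⟨h2, h3⟩ := ht; obtain ⟨h4, h5⟩ := hx₀I
          rw [abs_le]; constructor <;> nlinarith
        calc |g' t - g' x₀| ≤ Cδ * |t - x₀| ^ δ := hH t (hIab ht) x₀ hx₀ab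
          _ ≤ Cδ * ρ ^ δ := by
              apply mul_le_mul_of_nonneg_left _ hCδ.le
              exact Real.rpow_le_rpow (abs_nonneg _) (h1.trans hℓρ) hδ.le
          _ = η / 2 := hρδ
      have hdiam : ∀ t ∈ S ∩ I, |t - x₀| ≤ 4 * r / η := by
        intro t ⟨htS, htI⟩
        rcases le_or_gt η (g' x₀) with hsgn | hsgn
        · exact aux_diam hη (fun s hs => hd s (hIab hs))
            (fun s hs => by have := hclose s hs; rw [abs_le] at this; linarith)
            htI hx₀I htS.2 hgx₀
        · have hneg : g' x₀ ≤ -η := by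
            rcases abs_le.1 (le_of_eq rfl : |g' x₀| ≤ |g' x₀|) with ⟨h6, h7⟩
            rcases le_or_gt 0 (g' x₀) with h8 | h8
            · exfalso; rw [abs_of_nonneg h8] at hT1x₀; linarith
            · rw [abs_of_neg h8] at hT1x₀; linarith
          have := aux_diam (g := fun s => -g s) (g' := fun s => -g' s) hη
            (fun s hs => (hd s (hIab hs)).neg)
            (fun s hs => by have := hclose s hs; rw [abs_le] at this; simp; linarith)
            htI hx₀I (by simpa using htS.2) (by simpa using hgx₀)
          exact this
      have hsub : S ∩ I ⊆ Set.Icc (x₀ - 4 * r / η) (x₀ + 4 * r / η) := by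
        intro t ht
        have := abs_le.1 (hdiam t ht)
        exact ⟨by linarith [this.1], by linarith [this.2]⟩
      calc volume (S ∩ I) ≤ volume (Set.Icc (x₀ - 4 * r / η) (x₀ + 4 * r / η)) :=
            measure_mono hsub
        _ = ENNReal.ofReal (8 * r / η) := by rw [Real.volume_Icc]; congr 1; ring
    calc volume S ≤ volume (⋃ k ∈ Finset.range N, S ∩ Set.Icc (a + k * ℓ) (a + (k + 1) * ℓ)) := by
          apply measure_mono
          intro t ht
          rcases Set.mem_iUnion₂.1 (hcover ht) with ⟨k, hk, hmem⟩
          exact Set.mem_iUnion₂.2 ⟨k, hk, ht, hmem⟩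
      _ ≤ ∑ k ∈ Finset.range N, volume (S ∩ Set.Icc (a + k * ℓ) (a + (k + 1) * ℓ)) :=
          measure_biUnion_finset_le _ _
      _ ≤ ∑ k ∈ Finset.range N, ENNReal.ofReal (8 * r / η) := Finset.sum_le_sum hkey
      _ = (N : ENNReal) * ENNReal.ofReal (8 * r / η) := by
          rw [Finset.sum_const, Finset.card_range, nsmul_eq_mul]
      _ ≤ ENNReal.ofReal (C_T * r) := by
          rw [← ENNReal.ofReal_natCast, ← ENNReal.ofReal_mul (Nat.cast_nonneg N)]
          apply ENNReal.ofReal_le_ofReal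
          rw [hCT]
          have h9 : (0:ℝ) ≤ (b - a) / η * r := by
            have hba : (0:ℝ) < b - a := by linarith
            positivity
          have : (N:ℝ) * (8 * r / η) = (N:ℝ) * (8 / η) * r := by ring
          nlinarith
  · -- trivial case r > η
    calc volume S ≤ volume (Set.Icc a b) := measure_mono (fun t ht => ht.1)
      _ = ENNReal.ofReal (b - a) := Real.volume_Icc
      _ ≤ ENNReal.ofReal (C_T * r) := by
          apply ENNReal.ofReal_le_ofReal
          rw [hCT]
          have h1 : b - a ≤ (b - a) / η * r := by
            rw [div_mul_eq_mul_div, le_div_iff₀ hη]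
            nlinarith
          nlinarith [mul_pos (mul_pos hNpos (by positivity : (0:ℝ) < 8 / η)) hr]


/-- Compactness: (T2) implies (T1). -/
lemma aux_T2_T1 {m : ℕ} {a b : ℝ} (proj dproj : ℝ → (ℕ → Fin m) → ℝ)
    (hcont : Continuous fun p : ℝ × (ℕ → Fin m) => proj p.1 p.2)
    (hcont' : Continuous fun p : ℝ × (ℕ → Fin m) => dproj p.1 p.2)
    {η : ℝ} (hη : 0 < η)
    (hT2 : ∀ u v : ℕ → Fin m, u 0 ≠ v 0 → ∀ lam ∈ Set.Icc a b,
      proj lam u = proj lam v → η ≤ |dproj lam u - dproj lam v|) :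
    ∃ η' > 0, ∀ u v : ℕ → Fin m, u 0 ≠ v 0 → ∀ lam ∈ Set.Icc a b,
      |proj lam u - proj lam v| ≤ η' → η' ≤ |dproj lam u - dproj lam v| := by
  set P := ℝ × ((ℕ → Fin m) × (ℕ → Fin m)) with hP
  set F : P → ℝ := fun p => |proj p.1 p.2.1 - proj p.1 p.2.2| with hF
  set G : P → ℝ := fun p => |dproj p.1 p.2.1 - dproj p.1 p.2.2| with hG
  have hc1 : Continuous fun p : P => (p.1, p.2.1) :=
    continuous_fst.prodMk (continuous_fst.comp continuous_snd)
  have hc2 : Continuous fun p : P => (p.1, p.2.2) :=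
    continuous_fst.prodMk (continuous_snd.comp continuous_snd)
  have hFc : Continuous F := ((hcont.comp hc1).sub (hcont.comp hc2)).abs
  have hGc : Continuous G := ((hcont'.comp hc1).sub (hcont'.comp hc2)).abs
  set K : Set P := {p | p.1 ∈ Set.Icc a b ∧ p.2.1 0 ≠ p.2.2 0 ∧ G p ≤ η / 2} with hK
  have hKclosed : IsClosed K := by
    apply IsClosed.inter (isClosed_Icc.preimage continuous_fst)
    apply IsClosed.inter
    · have hcc : Continuous fun p : P => (p.2.1 0, p.2.2 0) :=
        ((continuous_apply 0).comp (continuous_fst.comp continuous_snd)).prodMk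
          ((continuous_apply 0).comp (continuous_snd.comp continuous_snd))
      exact (isClosed_discrete {q : Fin m × Fin m | q.1 ≠ q.2}).preimage hcc
    · exact isClosed_le hGc continuous_const
  have hKcompact : IsCompact K := by
    apply IsCompact.of_isClosed_subset (isCompact_Icc.prod isCompact_univ) hKclosed
    intro p hp
    exact ⟨hp.1, Set.mem_univ _⟩
  rcases Set.eq_empty_or_nonempty K with he | hne
  · refine ⟨η / 2, by positivity, ?_⟩
    intro u v huv lam hlam _
    by_contra h'
    exact Set.eq_empty_iff_forall_notMem.1 he (lam, u, v) ⟨hlam, huv, le_of_not_ge h'⟩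
  · obtain ⟨p0, hp0K, hmin⟩ := hKcompact.exists_isMinOn hne hFc.continuousOn
    have hFp0 : 0 < F p0 := by
      rcases lt_or_ge 0 (F p0) with h | h
      · exact h
      · exfalso
        have h0 : F p0 = 0 := le_antisymm h (abs_nonneg _)
        have heq : proj p0.1 p0.2.1 = proj p0.1 p0.2.2 := by
          have := abs_eq_zero.1 h0
          linarith [sub_eq_zero.1 this]
        have := hT2 p0.2.1 p0.2.2 hp0K.2.1 p0.1 hp0K.1 heq
        have := hp0K.2.2
        linarith
    refine ⟨min (η / 2) (F p0 / 2), by positivity, ?_⟩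
    intro u v huv lam hlam hle
    by_contra h'
    push_neg at h'
    have hpK : (lam, u, v) ∈ K :=
      ⟨hlam, huv, le_trans h'.le (min_le_left _ _)⟩
    have h1 : F p0 ≤ F (lam, u, v) := hmin hpK
    have h2 : F (lam, u, v) ≤ min (η / 2) (F p0 / 2) := hle
    have h3 := min_le_right (η / 2) (F p0 / 2)
    simp only [hF] at h1 h2
    linarith [le_trans h1 (le_trans h2 h3)]

/-- (T3) implies a pointwise lower bound on the derivative at coincidence points. -/
lemma aux_T3_T2 {a b : ℝ} (hab : a < b) {Cδ δ : ℝ} (hδ : 0 < δ) (hCδ : 0 < Cδ)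
    {C_T : ℝ} (hCT : 0 < C_T) (g g' : ℝ → ℝ)
    (hd : ∀ t ∈ Set.Icc a b, HasDerivAt g (g' t) t)
    (hH : ∀ s ∈ Set.Icc a b, ∀ t ∈ Set.Icc a b, |g' s - g' t| ≤ Cδ * |s - t| ^ δ)
    (hvol : ∀ r : ℝ, 0 < r →
      volume {t ∈ Set.Icc a b | |g t| ≤ r} ≤ ENNReal.ofReal (C_T * r))
    {l0 : ℝ} (hl0 : l0 ∈ Set.Icc a b) (h0 : g l0 = 0) :
    1 / (2 * C_T) ≤ |g' l0| := by
  set ρ0 : ℝ := (1 / (2 * C_T * Cδ)) ^ (δ⁻¹) with hρ0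
  have hρ0pos : 0 < ρ0 := Real.rpow_pos_of_pos (by positivity) _
  set ρ : ℝ := min (b - a) ρ0 with hρdef
  have hρ : 0 < ρ := lt_min (by linarith) hρ0pos
  have hρba : ρ ≤ b - a := min_le_left _ _
  have hρδ : Cδ * ρ ^ δ ≤ 1 / (2 * C_T) := by
    have h1 : ρ ^ δ ≤ ρ0 ^ δ := Real.rpow_le_rpow hρ.le (min_le_right _ _) hδ.le
    have h2 : ρ0 ^ δ = 1 / (2 * C_T * Cδ) := by
      rw [hρ0, Real.rpow_inv_rpow (by positivity) hδ.ne']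
    rw [h2] at h1
    calc Cδ * ρ ^ δ ≤ Cδ * (1 / (2 * C_T * Cδ)) := by
          exact mul_le_mul_of_nonneg_left h1 hCδ.le
      _ = 1 / (2 * C_T) := by field_simp
  set J : Set ℝ := Set.Icc (max a (l0 - ρ)) (min b (l0 + ρ)) with hJ
  have hJab : J ⊆ Set.Icc a b := Set.Icc_subset_Icc (le_max_left _ _) (min_le_left _ _)
  have hl0J : l0 ∈ J := ⟨max_le hl0.1 (by linarith), le_min hl0.2 (by linarith)⟩
  set M : ℝ := |g' l0| + Cδ * ρ ^ δ with hM
  have hMpos : 0 < M := by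
    have : 0 < Cδ * ρ ^ δ := by positivity
    have := abs_nonneg (g' l0)
    rw [hM]; linarith
  have hbd : ∀ t ∈ J, ‖g' t‖ ≤ M := by
    intro t ht
    have htρ : |t - l0| ≤ ρ := by
      obtain ⟨h1, h2⟩ := ht
      rw [abs_le]
      constructor
      · have := le_max_right a (l0 - ρ); linarith [le_trans this h1]
      · have := min_le_right b (l0 + ρ); linarith [le_trans h2 this]
    calc ‖g' t‖ = |g' t| := rfl
      _ ≤ |g' t - g' l0| + |g' l0| := by
          have := abs_sub_abs_le_abs_sub (g' t) (g' l0); linarith [abs_sub (g' t) (g' l0)]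
      _ ≤ Cδ * |t - l0| ^ δ + |g' l0| := by
          linarith [hH t (hJab ht) l0 hl0]
      _ ≤ Cδ * ρ ^ δ + |g' l0| := by
          have := Real.rpow_le_rpow (abs_nonneg _) htρ hδ.le
          nlinarith
      _ = M := by rw [hM]; ring
  have hlip : ∀ t ∈ J, |g t| ≤ M * ρ := by
    intro t ht
    have h1 : ‖g t - g l0‖ ≤ M * ‖t - l0‖ :=
      Convex.norm_image_sub_le_of_norm_hasDerivWithin_le
        (fun s hs => (hd s (hJab hs)).hasDerivWithinAt) hbd (convex_Icc _ _) hl0J ht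
    have htρ : ‖t - l0‖ ≤ ρ := by
      obtain ⟨h2, h3⟩ := ht
      rw [Real.norm_eq_abs, abs_le]
      constructor
      · have := le_max_right a (l0 - ρ); linarith [le_trans this h2]
      · have := min_le_right b (l0 + ρ); linarith [le_trans h3 this]
    rw [h0, sub_zero] at h1
    calc |g t| = ‖g t‖ := rfl
      _ ≤ M * ‖t - l0‖ := h1
      _ ≤ M * ρ := mul_le_mul_of_nonneg_left htρ hMpos.le
  have hsub : J ⊆ {t ∈ Set.Icc a b | |g t| ≤ M * ρ} :=
    fun t ht => ⟨hJab ht, hlip t ht⟩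
  have hvolJ : ENNReal.ofReal ρ ≤ volume J := by
    rw [hJ, Real.volume_Icc]
    apply ENNReal.ofReal_le_ofReal
    rcases max_cases a (l0 - ρ) with ⟨h1, h2⟩ | ⟨h1, h2⟩ <;>
      rcases min_cases b (l0 + ρ) with ⟨h3, h4⟩ | ⟨h3, h4⟩ <;>
      rw [h1, h3] <;> obtain ⟨h5, h6⟩ := hl0 <;> linarith
  have hchain : ENNReal.ofReal ρ ≤ ENNReal.ofReal (C_T * (M * ρ)) :=
    le_trans hvolJ (le_trans (measure_mono hsub) (hvol (M * ρ) (by positivity)))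
  have hreal : ρ ≤ C_T * (M * ρ) :=
    (ENNReal.ofReal_le_ofReal_iff (by positivity)).1 hchain
  have h1M : 1 ≤ C_T * M := by
    have := mul_le_mul_of_nonneg_right (le_refl (C_T * M)) hρ.le
    nlinarith
  have : C_T * M ≤ C_T * |g' l0| + 1 / 2 := by
    rw [hM]
    have h2 : C_T * (Cδ * ρ ^ δ) ≤ C_T * (1 / (2 * C_T)) := mul_le_mul_of_nonneg_left hρδ hCT.le
    have h3 : C_T * (1 / (2 * C_T)) = 1 / 2 := by field_simp
    nlinarith
  rw [div_le_iff₀ (by positivity)]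
  nlinarith


/-- Equivalence of the three transversality conditions (T1), (T2), (T3)
for the natural projections `Π^λ` of a parametrized IFS whose regularity (coming from
(A1)–(A4)) is encoded by: `λ ↦ Π^λ(u)` is differentiable with derivative `Π'` that is
`δ`-Hölder in `λ` uniformly in `u`, and `(λ, u) ↦ Π^λ(u)` and its `λ`-derivative are
continuous. Here `Ω = 𝒜^ℕ` with `𝒜 = Fin m` and the parameter ranges over the compact
interval `[a, b]`. -/
theorem transversality_conditions_equivalent
    {m : ℕ} (a b : ℝ) (hab : a < b)
    (proj dproj : ℝ → (ℕ → Fin m) → ℝ)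
    (δ C_δ : ℝ) (hδ : δ ∈ Set.Ioc (0:ℝ) 1) (hC : 0 < C_δ)
    (hderiv : ∀ u : ℕ → Fin m, ∀ lam ∈ Set.Icc a b,
      HasDerivAt (fun t => proj t u) (dproj lam u) lam)
    (hHolder : ∀ u : ℕ → Fin m, ∀ lam₁ ∈ Set.Icc a b, ∀ lam₂ ∈ Set.Icc a b,
      |dproj lam₁ u - dproj lam₂ u| ≤ C_δ * |lam₁ - lam₂| ^ δ)
    (hcont : Continuous fun p : ℝ × (ℕ → Fin m) => proj p.1 p.2)
    (hcont' : Continuous fun p : ℝ × (ℕ → Fin m) => dproj p.1 p.2) :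
    ((∃ η > 0, ∀ u v : ℕ → Fin m, u 0 ≠ v 0 → ∀ lam ∈ Set.Icc a b,
        |proj lam u - proj lam v| ≤ η → η ≤ |dproj lam u - dproj lam v|) ↔
      (∃ η > 0, ∀ u v : ℕ → Fin m, u 0 ≠ v 0 → ∀ lam ∈ Set.Icc a b,
        proj lam u = proj lam v → η ≤ |dproj lam u - dproj lam v|))
    ∧
    ((∃ η > 0, ∀ u v : ℕ → Fin m, u 0 ≠ v 0 → ∀ lam ∈ Set.Icc a b,
        proj lam u = proj lam v → η ≤ |dproj lam u - dproj lam v|) ↔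
      (∃ C_T > 0, ∀ u v : ℕ → Fin m, u 0 ≠ v 0 → ∀ r > 0,
        volume {lam ∈ Set.Icc a b | |proj lam u - proj lam v| ≤ r} ≤
          ENNReal.ofReal (C_T * r))) := by
  obtain ⟨hδ0, hδ1⟩ := hδ
  have hC2 : (0:ℝ) < 2 * C_δ := by linarith
  -- derivative of the difference
  have hd2 : ∀ u v : ℕ → Fin m, ∀ t ∈ Set.Icc a b,
      HasDerivAt (fun s => proj s u - proj s v) (dproj t u - dproj t v) t :=
    fun u v t ht => (hderiv u t ht).sub (hderiv v t ht)
  -- Hölder bound for the difference of derivatives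
  have hH2 : ∀ u v : ℕ → Fin m, ∀ s ∈ Set.Icc a b, ∀ t ∈ Set.Icc a b,
      |(dproj s u - dproj s v) - (dproj t u - dproj t v)| ≤ (2 * C_δ) * |s - t| ^ δ := by
    intro u v s hs t ht
    have h1 := hHolder u s hs t ht
    have h2 := hHolder v s hs t ht
    have h3 : (dproj s u - dproj s v) - (dproj t u - dproj t v)
        = (dproj s u - dproj t u) - (dproj s v - dproj t v) := by ring
    rw [h3]
    calc |(dproj s u - dproj t u) - (dproj s v - dproj t v)|
        ≤ |dproj s u - dproj t u| + |dproj s v - dproj t v| := abs_sub _ _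
      _ ≤ (2 * C_δ) * |s - t| ^ δ := by linarith
  -- (T2) → (T1)
  have h21 : (∃ η > 0, ∀ u v : ℕ → Fin m, u 0 ≠ v 0 → ∀ lam ∈ Set.Icc a b,
        proj lam u = proj lam v → η ≤ |dproj lam u - dproj lam v|) →
      (∃ η > 0, ∀ u v : ℕ → Fin m, u 0 ≠ v 0 → ∀ lam ∈ Set.Icc a b,
        |proj lam u - proj lam v| ≤ η → η ≤ |dproj lam u - dproj lam v|) := by
    rintro ⟨η, hη, h⟩
    exact aux_T2_T1 proj dproj hcont hcont' hη h
  -- (T1) → (T2)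
  have h12 : (∃ η > 0, ∀ u v : ℕ → Fin m, u 0 ≠ v 0 → ∀ lam ∈ Set.Icc a b,
        |proj lam u - proj lam v| ≤ η → η ≤ |dproj lam u - dproj lam v|) →
      (∃ η > 0, ∀ u v : ℕ → Fin m, u 0 ≠ v 0 → ∀ lam ∈ Set.Icc a b,
        proj lam u = proj lam v → η ≤ |dproj lam u - dproj lam v|) := by
    rintro ⟨η, hη, h⟩
    refine ⟨η, hη, fun u v huv lam hlam heq => ?_⟩
    exact h u v huv lam hlam (by rw [heq, sub_self, abs_zero]; exact hη.le)
  -- (T2) → (T3)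
  have h23 : (∃ η > 0, ∀ u v : ℕ → Fin m, u 0 ≠ v 0 → ∀ lam ∈ Set.Icc a b,
        proj lam u = proj lam v → η ≤ |dproj lam u - dproj lam v|) →
      (∃ C_T > 0, ∀ u v : ℕ → Fin m, u 0 ≠ v 0 → ∀ r > 0,
        volume {lam ∈ Set.Icc a b | |proj lam u - proj lam v| ≤ r} ≤
          ENNReal.ofReal (C_T * r)) := by
    intro h2
    obtain ⟨η, hη, h1⟩ := h21 h2
    obtain ⟨C_T, hCT, hbound⟩ := aux_measure_bound hab hη hδ0 hC2
    refine ⟨C_T, hCT, fun u v huv r hr => ?_⟩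
    exact hbound (fun t => proj t u - proj t v) (fun t => dproj t u - dproj t v)
      (hd2 u v) (hH2 u v) (fun t ht hle => h1 u v huv t ht hle) r hr
  -- (T3) → (T2)
  have h32 : (∃ C_T > 0, ∀ u v : ℕ → Fin m, u 0 ≠ v 0 → ∀ r > 0,
        volume {lam ∈ Set.Icc a b | |proj lam u - proj lam v| ≤ r} ≤
          ENNReal.ofReal (C_T * r)) →
      (∃ η > 0, ∀ u v : ℕ → Fin m, u 0 ≠ v 0 → ∀ lam ∈ Set.Icc a b,
        proj lam u = proj lam v → η ≤ |dproj lam u - dproj lam v|) := by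
    rintro ⟨C_T, hCT, h⟩
    refine ⟨1 / (2 * C_T), by positivity, ?_⟩
    intro u v huv lam hlam heq
    exact aux_T3_T2 hab hδ0 hC2 hCT (fun t => proj t u - proj t v)
      (fun t => dproj t u - dproj t v) (hd2 u v) (hH2 u v)
      (fun r hr => h u v huv r hr) hlam (by show proj lam u - proj lam v = 0; rw [heq, sub_self])
  exact ⟨⟨h12, h21⟩, ⟨h23, h32⟩⟩
end

section
/- Let $F:[a,b]\to\mathbb{R}$ be differentiable with $\delta$-Hölder derivative: $|F'(s)-F'(t)|\le C_\delta|s-t|^\delta$ for some $\delta\in(0,1]$. If $F(\lambda_0)=F'(\lambda_0)=0$ for some interior point $\lambda_0$, then $|F(\lambda_0+t)| \le C_\delta|t|^{1+\delta}$ for all admissible $t$. Consequently $F$ cannot satisfy a linear level-set bound of the form $\mathcal{L}^1\{\lambda: |F(\lambda)|\le r\}\le C_T r$ for all $r>0$. -/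
open Set MeasureTheory

/-- If `F : [a,b] → ℝ` is differentiable with `δ`-Hölder derivative
(`|F'(s) - F'(t)| ≤ C_δ |s - t|^δ`) and `F(λ₀) = F'(λ₀) = 0` at an interior point `λ₀`,
then `|F(λ₀ + t)| ≤ C_δ |t|^{1+δ}` for all admissible `t`; consequently `F` cannot satisfy
a linear level-set bound `ℒ¹{λ : |F(λ)| ≤ r} ≤ C_T r` for all `r > 0`. -/
theorem holder_deriv_double_zero_no_linear_levelset_bound
    (a b lam₀ δ C_δ : ℝ) (F F' : ℝ → ℝ)
    (hδ : δ ∈ Set.Ioc (0:ℝ) 1) (hC : 0 < C_δ)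
    (hlam₀ : lam₀ ∈ Set.Ioo a b)
    (hderiv : ∀ t ∈ Set.Icc a b, HasDerivAt F (F' t) t)
    (hHolder : ∀ s ∈ Set.Icc a b, ∀ t ∈ Set.Icc a b, |F' s - F' t| ≤ C_δ * |s - t| ^ δ)
    (hF0 : F lam₀ = 0) (hF'0 : F' lam₀ = 0) :
    (∀ t : ℝ, lam₀ + t ∈ Set.Icc a b → |F (lam₀ + t)| ≤ C_δ * |t| ^ (1 + δ)) ∧
    ¬ ∃ C_T > 0, ∀ r > 0,
        volume {lam ∈ Set.Icc a b | |F lam| ≤ r} ≤ ENNReal.ofReal (C_T * r) := by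
  have hδ0 : (0:ℝ) < δ := hδ.1
  have hlam : lam₀ ∈ Icc a b := Ioo_subset_Icc_self hlam₀
  -- continuity of F' on [a, b]
  have hcont : ContinuousOn F' (Icc a b) := by
    intro t ht
    have hb : Filter.Tendsto (fun s => C_δ * |s - t| ^ δ) (nhdsWithin t (Icc a b)) (nhds 0) := by
      have h1 : Filter.Tendsto (fun s : ℝ => |s - t|) (nhdsWithin t (Icc a b)) (nhds 0) := by
        have : ContinuousAt (fun s : ℝ => |s - t|) t := by fun_prop
        have := this.continuousWithinAt (s := Icc a b)
        simpa [ContinuousWithinAt] using this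
      have h2 : Filter.Tendsto (fun x : ℝ => C_δ * x ^ δ) (nhds 0) (nhds 0) := by
        have hca : ContinuousAt (fun x : ℝ => C_δ * x ^ δ) 0 :=
          (continuous_const.continuousAt).mul
            (Real.continuousAt_rpow_const 0 δ (Or.inr hδ0.le))
        have h0 : C_δ * (0:ℝ) ^ δ = 0 := by simp [Real.zero_rpow hδ0.ne']
        simpa [ContinuousAt, h0] using hca
      exact h2.comp h1
    rw [ContinuousWithinAt, tendsto_iff_dist_tendsto_zero]
    refine squeeze_zero' (Filter.Eventually.of_forall fun s => dist_nonneg) ?_ hb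
    filter_upwards [self_mem_nhdsWithin] with s hs
    calc dist (F' s) (F' t) = |F' s - F' t| := Real.dist_eq _ _
      _ ≤ C_δ * |s - t| ^ δ := hHolder s hs t ht
  -- Part 1
  have part1 : ∀ t : ℝ, lam₀ + t ∈ Set.Icc a b → |F (lam₀ + t)| ≤ C_δ * |t| ^ (1 + δ) := by
    intro t ht
    have hsub : uIcc lam₀ (lam₀ + t) ⊆ Icc a b := uIcc_subset_Icc hlam ht
    have hint : IntervalIntegrable F' volume lam₀ (lam₀ + t) :=
      (hcont.mono hsub).intervalIntegrable
    have hftc : ∫ x in lam₀..(lam₀ + t), F' x = F (lam₀ + t) - F lam₀ :=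
      intervalIntegral.integral_eq_sub_of_hasDerivAt (fun x hx => hderiv x (hsub hx)) hint
    have hbd : ∀ x ∈ Set.uIoc lam₀ (lam₀ + t), ‖F' x‖ ≤ C_δ * |t| ^ δ := by
      intro x hx
      have hx' : x ∈ uIcc lam₀ (lam₀ + t) := Set.Ioc_subset_Icc_self hx
      have hxab : x ∈ Icc a b := hsub hx'
      have h1 : |x - lam₀| ≤ |t| := by
        have := abs_sub_left_of_mem_uIcc hx'
        simpa using this
      calc ‖F' x‖ = |F' x - F' lam₀| := by rw [hF'0]; simp [Real.norm_eq_abs]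
        _ ≤ C_δ * |x - lam₀| ^ δ := hHolder x hxab lam₀ hlam
        _ ≤ C_δ * |t| ^ δ := by gcongr <;> positivity
    have := intervalIntegral.norm_integral_le_of_norm_le_const hbd
    rw [hftc] at this
    simp only [hF0, sub_zero, Real.norm_eq_abs, add_sub_cancel_left] at this
    calc |F (lam₀ + t)| ≤ C_δ * |t| ^ δ * |t| := this
      _ = C_δ * |t| ^ (1 + δ) := by
        rw [Real.rpow_add' (abs_nonneg t) (by positivity), Real.rpow_one]; ring
  refine ⟨part1, ?_⟩
  -- Part 2
  rintro ⟨C_T, hCT, hbound⟩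
  obtain ⟨ha, hb⟩ := hlam₀
  have hmpos : (0:ℝ) < min (lam₀ - a) (b - lam₀) := lt_min (by linarith) (by linarith)
  set ρ := min (min (lam₀ - a) (b - lam₀)) (((C_T * C_δ)⁻¹) ^ (δ⁻¹)) with hρdef
  have hρpos : 0 < ρ := lt_min hmpos (Real.rpow_pos_of_pos (by positivity) _)
  have hρa : ρ ≤ lam₀ - a := le_trans (min_le_left _ _) (min_le_left _ _)
  have hρb : ρ ≤ b - lam₀ := le_trans (min_le_left _ _) (min_le_right _ _)
  have hρδ : ρ ^ δ ≤ (C_T * C_δ)⁻¹ := by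
    calc ρ ^ δ ≤ ((((C_T * C_δ)⁻¹)) ^ δ⁻¹) ^ δ :=
          Real.rpow_le_rpow hρpos.le (min_le_right _ _) hδ0.le
      _ = (C_T * C_δ)⁻¹ := Real.rpow_inv_rpow (by positivity) hδ0.ne'
  set r := C_δ * ρ ^ (1 + δ) with hrdef
  have hrpos : 0 < r := by positivity
  have hsubset : Icc (lam₀ - ρ) (lam₀ + ρ) ⊆ {lam ∈ Set.Icc a b | |F lam| ≤ r} := by
    intro x hx
    have hxab : x ∈ Icc a b := ⟨by linarith [hx.1], by linarith [hx.2]⟩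
    refine ⟨hxab, ?_⟩
    have h1 := part1 (x - lam₀) (by rwa [add_sub_cancel])
    rw [add_sub_cancel] at h1
    calc |F x| ≤ C_δ * |x - lam₀| ^ (1 + δ) := h1
      _ ≤ C_δ * ρ ^ (1 + δ) := by
        have habs : |x - lam₀| ≤ ρ := abs_le.2 ⟨by linarith [hx.1], by linarith [hx.2]⟩
        gcongr
  have hμ : ENNReal.ofReal (lam₀ + ρ - (lam₀ - ρ)) ≤ ENNReal.ofReal (C_T * r) := by
    rw [← Real.volume_Icc]
    exact (measure_mono hsubset).trans (hbound r hrpos)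
  have h2ρ : 2 * ρ ≤ C_T * r := by
    have := (ENNReal.ofReal_le_ofReal_iff (by positivity)).1 hμ
    linarith
  have hsplit : ρ ^ (1 + δ) = ρ * ρ ^ δ := by
    rw [Real.rpow_add' hρpos.le (by positivity), Real.rpow_one]
  have hkey : C_T * C_δ * ρ ^ δ ≤ 1 := by
    have h3 : C_T * C_δ * ρ ^ δ ≤ C_T * C_δ * (C_T * C_δ)⁻¹ := by
      gcongr
    rwa [mul_inv_cancel₀ (by positivity)] at h3
  have : C_T * r ≤ ρ := by
    rw [hrdef, hsplit]
    calc C_T * (C_δ * (ρ * ρ ^ δ)) = (C_T * C_δ * ρ ^ δ) * ρ := by ring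
      _ ≤ 1 * ρ := by gcongr
      _ = ρ := one_mul ρ
  linarith
end

section
/- Suppose an IFS $\Psi=\{f_j\}_{j\in\mathcal{A}}$ of $C^{1+\delta}$ contractions on a compact interval $X$ has attractor equal to all of $X$ and is overlapping in the sense that $\sum_{j\in\mathcal{A}}|f_j(X)|>|X|$. Then the zero $s(\Psi)$ of the pressure function, $P_\Psi(s(\Psi))=0$, satisfies $s(\Psi)>1$. -/
open Filter Topology Set MeasureTheory

/-- Composition of the IFS maps along a finite word given as a tuple. -/
noncomputable def tupleMap {m n : ℕ} (f : Fin m → ℝ → ℝ) (w : Fin n → Fin m) : ℝ → ℝ :=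
  (List.ofFn w).foldr (fun j g => f j ∘ g) id

lemma tupleMap_zero {m : ℕ} (f : Fin m → ℝ → ℝ) (w : Fin 0 → Fin m) :
    tupleMap f w = id := by
  simp [tupleMap]

lemma tupleMap_succ {m n : ℕ} (f : Fin m → ℝ → ℝ) (w : Fin (n+1) → Fin m) :
    tupleMap f w = f (w 0) ∘ tupleMap f (Fin.tail w) := by
  simp only [tupleMap, List.ofFn_succ]
  rfl

private lemma foldr_comp_eq {m : ℕ} (f : Fin m → ℝ → ℝ) (l : List (Fin m)) (g : ℝ → ℝ) :
    l.foldr (fun j h => f j ∘ h) g = (l.foldr (fun j h => f j ∘ h) id) ∘ g := by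
  induction l with
  | nil => rfl
  | cons a l ih => simp only [List.foldr_cons, ih]; rfl

lemma tupleMap_snoc {m n : ℕ} (f : Fin m → ℝ → ℝ) (w : Fin n → Fin m) (j : Fin m) :
    tupleMap f (Fin.snoc w j) = tupleMap f w ∘ f j := by
  rw [tupleMap, List.ofFn_succ']
  simp only [Fin.snoc_castSucc, Fin.snoc_last]
  rw [List.concat_eq_append, List.foldr_append, foldr_comp_eq]
  simp [tupleMap, Function.comp]

lemma lintegral_image_eq_lintegral_abs_deriv_mul' {s : Set ℝ} {f : ℝ → ℝ} {f' : ℝ → ℝ}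
    (hs : MeasurableSet s) (hf' : ∀ x ∈ s, HasDerivWithinAt f (f' x) s x)
    (hf : InjOn f s) (g : ℝ → ENNReal) :
    ∫⁻ x in f '' s, g x = ∫⁻ x in s, ENNReal.ofReal |f' x| * g (f x) := by
  simpa only [ContinuousLinearMap.det_toSpanSingleton] using
    MeasureTheory.lintegral_image_eq_lintegral_abs_det_fderiv_mul volume hs
      (fun x hx => (hf' x hx).hasFDerivWithinAt) hf g

lemma injOn_of_abs_deriv_pos {f : ℝ → ℝ} {a b γ : ℝ} (hf : ContDiff ℝ 1 f)
    (hγ : 0 < γ) (hd : ∀ x ∈ Icc a b, γ ≤ |deriv f x|) : InjOn f (Icc a b) := by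
  have hcont : Continuous (deriv f) := hf.continuous_deriv le_rfl
  have hne : ∀ x ∈ Icc a b, deriv f x ≠ 0 := by
    intro x hx h0
    have := hd x hx
    rw [h0, abs_zero] at this
    linarith
  have hsign : (∀ x ∈ Icc a b, 0 < deriv f x) ∨ (∀ x ∈ Icc a b, deriv f x < 0) := by
    by_contra hcon
    push_neg at hcon
    obtain ⟨⟨u, hu, hu0⟩, ⟨v, hv, hv0⟩⟩ := hcon
    have hu0' : deriv f u < 0 := lt_of_le_of_ne hu0 (hne u hu)
    have hv0' : 0 < deriv f v := lt_of_le_of_ne (by simpa using hv0) (Ne.symm (hne v hv))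
    have hsub : uIcc u v ⊆ Icc a b := by
      rw [uIcc_eq_union]
      rintro z (hz | hz)
      · exact ⟨le_trans hu.1 hz.1, le_trans hz.2 hv.2⟩
      · exact ⟨le_trans hv.1 hz.1, le_trans hz.2 hu.2⟩
    have h0mem : (0:ℝ) ∈ uIcc (deriv f u) (deriv f v) := by
      rw [Set.mem_uIcc]
      left; exact ⟨hu0'.le, hv0'.le⟩
    have := intermediate_value_uIcc (hcont.continuousOn (s := uIcc u v)) h0mem
    obtain ⟨z, hz, hz0⟩ := this
    exact hne z (hsub hz) hz0
  rcases hsign with hpos | hneg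
  · exact (strictMonoOn_of_deriv_pos (convex_Icc a b) hf.continuous.continuousOn
      (fun x hx => hpos x (interior_subset hx))).injOn
  · exact (strictAntiOn_of_deriv_neg (convex_Icc a b) hf.continuous.continuousOn
      (fun x hx => hneg x (interior_subset hx))).injOn

/-- If a `C^{1+δ}` uniformly hyperbolic contracting IFS `{f_j}` on the
compact interval `X = [x₀, x₁]` has attractor equal to all of `X` and is overlapping
(`∑_j |f_j(X)| > |X|`), then the zero `s` of the pressure function
(`P_Ψ(s) = lim_n n⁻¹ log ∑_{|u|=n} ‖f_u'‖^s = 0`) satisfies `s > 1`. -/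
theorem bowen_root_gt_one_of_overlap
    {m : ℕ} (f : Fin m → ℝ → ℝ) (x₀ x₁ γ₁ γ₂ δ C_H s : ℝ)
    (hX : x₀ < x₁) (hδ : δ ∈ Set.Ioc (0:ℝ) 1)
    (hsmooth : ∀ j, ContDiff ℝ 1 (f j))
    (hholder : ∀ j, ∀ x ∈ Set.Icc x₀ x₁, ∀ y ∈ Set.Icc x₀ x₁,
      |deriv (f j) x - deriv (f j) y| ≤ C_H * |x - y| ^ δ)
    (hmaps : ∀ j, Set.MapsTo (f j) (Set.Icc x₀ x₁) (Set.Icc x₀ x₁))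
    (hγ₁ : 0 < γ₁) (hγ₂ : γ₂ < 1)
    (hbounds : ∀ j, ∀ x ∈ Set.Icc x₀ x₁, γ₁ ≤ |deriv (f j) x| ∧ |deriv (f j) x| ≤ γ₂)
    -- the attractor is the whole interval `X`
    (hattractor : Set.Icc x₀ x₁ = ⋃ j : Fin m, f j '' Set.Icc x₀ x₁)
    -- overlapping: the total length of the cylinder intervals exceeds `|X|`
    (hoverlap : x₁ - x₀ < ∑ j : Fin m, (volume (f j '' Set.Icc x₀ x₁)).toReal)
    (hs : 0 < s)
    -- `s` is the zero of the pressure function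
    (hpressure : Tendsto (fun n : ℕ => (n : ℝ)⁻¹ * Real.log
        (∑ w : Fin n → Fin m,
          (sSup ((fun x => |deriv (tupleMap f w) x|) '' Set.Icc x₀ x₁)) ^ s))
      atTop (𝓝 0)) :
    1 < s := by
  by_contra hcon
  push_neg at hcon
  -- hcon : s ≤ 1
  obtain ⟨hδ0, hδ1⟩ := hδ
  set I : Set ℝ := Set.Icc x₀ x₁ with hIdef
  have hL : 0 < x₁ - x₀ := sub_pos.2 hX
  set L : ℝ := x₁ - x₀ with hLdef
  have hx₀I : x₀ ∈ I := ⟨le_rfl, hX.le⟩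
  have hIne : I.Nonempty := ⟨x₀, hx₀I⟩
  have hImeas : MeasurableSet I := measurableSet_Icc
  have hvolI : volume I = ENNReal.ofReal L := by rw [hIdef, Real.volume_Icc]
  have hm : 0 < m := by
    rcases Nat.eq_zero_or_pos m with h | h
    · exfalso
      subst h
      have hx : x₀ ∈ I := hx₀I
      rw [hattractor] at hx
      simpa using hx
    · exact h
  have hγ₂0 : 0 < γ₂ := by
    have := hbounds ⟨0, hm⟩ x₀ hx₀I
    linarith [this.1, this.2]
  -- basic smoothness facts
  have hdiff : ∀ j, Differentiable ℝ (f j) := fun j => (hsmooth j).differentiable one_ne_zero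
  have hWsmooth : ∀ (n : ℕ) (w : Fin n → Fin m), ContDiff ℝ 1 (tupleMap f w) := by
    intro n
    induction n with
    | zero => intro w; rw [tupleMap_zero]; exact contDiff_id
    | succ n ih =>
        intro w; rw [tupleMap_succ]; exact (hsmooth _).comp (ih _)
  have hWdiff : ∀ (n : ℕ) (w : Fin n → Fin m), Differentiable ℝ (tupleMap f w) :=
    fun n w => (hWsmooth n w).differentiable one_ne_zero
  have hWdcont : ∀ (n : ℕ) (w : Fin n → Fin m), Continuous (deriv (tupleMap f w)) :=
    fun n w => (hWsmooth n w).continuous_deriv le_rfl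
  have hWmaps : ∀ (n : ℕ) (w : Fin n → Fin m), Set.MapsTo (tupleMap f w) I I := by
    intro n
    induction n with
    | zero => intro w; rw [tupleMap_zero]; exact fun x hx => hx
    | succ n ih => intro w; rw [tupleMap_succ]; exact (hmaps _).comp (ih _)
  have hWchain : ∀ (n : ℕ) (w : Fin (n+1) → Fin m) (x : ℝ),
      deriv (tupleMap f w) x
        = deriv (f (w 0)) (tupleMap f (Fin.tail w) x) * deriv (tupleMap f (Fin.tail w)) x := by
    intro n w x
    rw [tupleMap_succ]
    exact deriv_comp (x := x) ((hdiff _).differentiableAt) ((hWdiff n _).differentiableAt)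
  have hWchain' : ∀ (n : ℕ) (b : Fin n → Fin m) (j : Fin m) (x : ℝ),
      deriv (tupleMap f (Fin.snoc b j)) x
        = deriv (tupleMap f b) (f j x) * deriv (f j) x := by
    intro n b j x
    rw [tupleMap_snoc]
    exact deriv_comp (x := x) ((hWdiff n b).differentiableAt) ((hdiff j).differentiableAt)
  have hWbounds : ∀ (n : ℕ) (w : Fin n → Fin m), ∀ x ∈ I,
      γ₁ ^ n ≤ |deriv (tupleMap f w) x| ∧ |deriv (tupleMap f w) x| ≤ γ₂ ^ n := by
    intro n
    induction n with
    | zero =>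
        intro w x _
        rw [tupleMap_zero]
        simp
    | succ n ih =>
        intro w x hx
        rw [hWchain n w x, abs_mul]
        have h1 := ih (Fin.tail w) x hx
        have h2 := hbounds (w 0) (tupleMap f (Fin.tail w) x) (hWmaps n _ hx)
        constructor
        · rw [pow_succ]
          calc γ₁ ^ n * γ₁ ≤ γ₁ ^ n * |deriv (f (w 0)) (tupleMap f (Fin.tail w) x)| :=
                mul_le_mul_of_nonneg_left h2.1 (pow_nonneg hγ₁.le n)
            _ ≤ |deriv (f (w 0)) (tupleMap f (Fin.tail w) x)| * |deriv (tupleMap f (Fin.tail w)) x| := by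
                rw [mul_comm]
                exact mul_le_mul_of_nonneg_left h1.1 (abs_nonneg _)
        · rw [pow_succ]
          calc |deriv (f (w 0)) (tupleMap f (Fin.tail w) x)| * |deriv (tupleMap f (Fin.tail w)) x|
              ≤ γ₂ * γ₂ ^ n :=
                mul_le_mul h2.2 h1.2 (abs_nonneg _) hγ₂0.le
            _ = γ₂ ^ n * γ₂ := mul_comm _ _
  -- one-step Lipschitz bound
  have hlip1 : ∀ j, ∀ x ∈ I, ∀ y ∈ I, |f j x - f j y| ≤ γ₂ * |x - y| := by
    have key : ∀ j, ∀ x ∈ I, ∀ y ∈ I, x < y → |f j y - f j x| ≤ γ₂ * |y - x| := by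
      intro j x hx y hy hxy
      obtain ⟨c, hc, hc'⟩ := exists_deriv_eq_slope (f j) hxy
        ((hdiff j).continuous.continuousOn) (fun z _ => (hdiff j).differentiableAt.differentiableWithinAt)
      have hcI : c ∈ I := ⟨le_trans hx.1 hc.1.le, le_trans hc.2.le hy.2⟩
      have h2 := (hbounds j c hcI).2
      have hyx : (0:ℝ) < y - x := sub_pos.2 hxy
      have : f j y - f j x = deriv (f j) c * (y - x) := by
        field_simp at hc'
        linarith [hc']
      rw [this, abs_mul, abs_of_pos hyx]
      exact mul_le_mul_of_nonneg_right h2 hyx.le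
    intro j x hx y hy
    rcases lt_trichotomy x y with h | h | h
    · rw [abs_sub_comm, abs_sub_comm x y]
      exact key j x hx y hy h
    · rw [h]
      simp
    · exact key j y hy x hx h
  have hWlip : ∀ (n : ℕ) (w : Fin n → Fin m), ∀ x ∈ I, ∀ y ∈ I,
      |tupleMap f w x - tupleMap f w y| ≤ γ₂ ^ n * |x - y| := by
    intro n
    induction n with
    | zero => intro w x _ y _; rw [tupleMap_zero]; simp
    | succ n ih =>
        intro w x hx y hy
        rw [tupleMap_succ]
        calc |f (w 0) (tupleMap f (Fin.tail w) x) - f (w 0) (tupleMap f (Fin.tail w) y)|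
            ≤ γ₂ * |tupleMap f (Fin.tail w) x - tupleMap f (Fin.tail w) y| :=
              hlip1 (w 0) _ (hWmaps n _ hx) _ (hWmaps n _ hy)
          _ ≤ γ₂ * (γ₂ ^ n * |x - y|) :=
              mul_le_mul_of_nonneg_left (ih (Fin.tail w) x hx y hy) hγ₂0.le
          _ = γ₂ ^ (n+1) * |x - y| := by ring
  -- distortion
  set r : ℝ := γ₂ ^ δ with hrdef
  set c : ℝ := C_H * L ^ δ / γ₁ with hcdef
  have hr0 : 0 < r := Real.rpow_pos_of_pos hγ₂0 δ
  have hr1 : r < 1 := Real.rpow_lt_one hγ₂0.le hγ₂ hδ0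
  have hLδ : (0:ℝ) < L ^ δ := Real.rpow_pos_of_pos hL δ
  have hCH : 0 ≤ C_H := by
    have := hholder ⟨0, hm⟩ x₀ hx₀I x₁ ⟨hX.le, le_rfl⟩
    have h2 : (0:ℝ) ≤ C_H * |x₀ - x₁| ^ δ := le_trans (abs_nonneg _) this
    have h3 : (0:ℝ) < |x₀ - x₁| ^ δ := Real.rpow_pos_of_pos (by rw [abs_sub_comm, abs_of_pos hL]; exact hL) δ
    nlinarith
  have hc0 : 0 ≤ c := by positivity
  have habs_le_L : ∀ x ∈ I, ∀ y ∈ I, |x - y| ≤ L := by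
    intro x hx y hy
    rw [abs_sub_le_iff]
    constructor <;> [linarith [hx.2, hy.1]; linarith [hy.2, hx.1]]
  have hpow_rpow : ∀ n : ℕ, (γ₂ ^ n : ℝ) ^ δ = r ^ n := by
    intro n
    rw [hrdef, ← Real.rpow_natCast γ₂ n, ← Real.rpow_mul hγ₂0.le, mul_comm,
      Real.rpow_mul hγ₂0.le, Real.rpow_natCast]
  have hdist0 : ∀ (n : ℕ) (w : Fin n → Fin m), ∀ x ∈ I, ∀ y ∈ I,
      |deriv (tupleMap f w) x| ≤ Real.exp (c * ∑ i ∈ Finset.range n, r ^ i)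
        * |deriv (tupleMap f w) y| := by
    intro n
    induction n with
    | zero =>
        intro w x _ y _
        rw [tupleMap_zero]
        simp
    | succ n ih =>
        intro w x hx y hy
        set G := tupleMap f (Fin.tail w) with hGdef
        have hGx : G x ∈ I := hWmaps n _ hx
        have hGy : G y ∈ I := hWmaps n _ hy
        have hay : γ₁ ≤ |deriv (f (w 0)) (G y)| := (hbounds (w 0) (G y) hGy).1
        have step1 : |deriv (f (w 0)) (G x)| ≤ Real.exp (c * r ^ n) * |deriv (f (w 0)) (G y)| := by
          have h1 : |deriv (f (w 0)) (G x)| ≤ |deriv (f (w 0)) (G y)| + C_H * |G x - G y| ^ δ := by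
            have := hholder (w 0) (G x) hGx (G y) hGy
            have habs := abs_sub_abs_le_abs_sub (deriv (f (w 0)) (G x)) (deriv (f (w 0)) (G y))
            linarith
          have h2 : |G x - G y| ^ δ ≤ r ^ n * L ^ δ := by
            have hb : |G x - G y| ≤ γ₂ ^ n * L := by
              calc |G x - G y| ≤ γ₂ ^ n * |x - y| := hWlip n _ x hx y hy
                _ ≤ γ₂ ^ n * L := mul_le_mul_of_nonneg_left (habs_le_L x hx y hy)
                    (pow_nonneg hγ₂0.le n)
            calc |G x - G y| ^ δ ≤ (γ₂ ^ n * L) ^ δ :=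
                Real.rpow_le_rpow (abs_nonneg _) hb hδ0.le
              _ = (γ₂ ^ n) ^ δ * L ^ δ := Real.mul_rpow (pow_nonneg hγ₂0.le n) hL.le
              _ = r ^ n * L ^ δ := by rw [hpow_rpow]
          have h3 : C_H * |G x - G y| ^ δ ≤ (c * r ^ n) * |deriv (f (w 0)) (G y)| := by
            calc C_H * |G x - G y| ^ δ ≤ C_H * (r ^ n * L ^ δ) :=
                mul_le_mul_of_nonneg_left h2 hCH
              _ = (c * r ^ n) * γ₁ := by rw [hcdef]; field_simp
              _ ≤ (c * r ^ n) * |deriv (f (w 0)) (G y)| :=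
                mul_le_mul_of_nonneg_left hay (by positivity)
          have h4 : |deriv (f (w 0)) (G y)| + (c * r ^ n) * |deriv (f (w 0)) (G y)|
              ≤ Real.exp (c * r ^ n) * |deriv (f (w 0)) (G y)| := by
            have h5 : 1 + c * r ^ n ≤ Real.exp (c * r ^ n) := by
              have := Real.add_one_le_exp (c * r ^ n)
              linarith
            nlinarith [abs_nonneg (deriv (f (w 0)) (G y))]
          linarith
        have hIH := ih (Fin.tail w) x hx y hy
        rw [hWchain n w x, hWchain n w y, abs_mul, abs_mul]
        calc |deriv (f (w 0)) (G x)| * |deriv G x|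
            ≤ (Real.exp (c * r ^ n) * |deriv (f (w 0)) (G y)|)
              * (Real.exp (c * ∑ i ∈ Finset.range n, r ^ i) * |deriv G y|) := by
              apply mul_le_mul step1 hIH (abs_nonneg _)
              positivity
          _ = Real.exp (c * ∑ i ∈ Finset.range (n+1), r ^ i)
              * (|deriv (f (w 0)) (G y)| * |deriv G y|) := by
              rw [Finset.sum_range_succ, mul_add, Real.exp_add]
              ring
  set D : ℝ := Real.exp (c / (1 - r)) with hDdef
  have hD1 : 1 ≤ D := Real.one_le_exp (div_nonneg hc0 (by linarith))
  have hD0 : 0 < D := Real.exp_pos _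
  have hdist : ∀ (n : ℕ) (w : Fin n → Fin m), ∀ x ∈ I, ∀ y ∈ I,
      |deriv (tupleMap f w) x| ≤ D * |deriv (tupleMap f w) y| := by
    intro n w x hx y hy
    refine le_trans (hdist0 n w x hx y hy) (mul_le_mul_of_nonneg_right ?_ (abs_nonneg _))
    rw [hDdef, Real.exp_le_exp]
    have hsum : ∑ i ∈ Finset.range n, r ^ i ≤ (1 - r)⁻¹ :=
      sum_le_hasSum (Finset.range n) (fun i _ => (pow_pos hr0 i).le)
        (hasSum_geometric_of_lt_one hr0.le hr1)
    calc c * ∑ i ∈ Finset.range n, r ^ i ≤ c * (1 - r)⁻¹ :=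
        mul_le_mul_of_nonneg_left hsum hc0
      _ = c / (1 - r) := by rw [div_eq_mul_inv]
  -- the cylinder sets
  set A : Fin m → Set ℝ := fun j => f j '' I with hAdef
  have hAmeas : ∀ j, MeasurableSet (A j) :=
    fun j => (isCompact_Icc.image (hdiff j).continuous).measurableSet
  have hAsub : ∀ j, A j ⊆ I := fun j => (hmaps j).image_subset
  have hAvol : ∀ j, volume (A j) ≠ ⊤ := by
    intro j
    exact ne_top_of_le_ne_top (by rw [hvolI]; exact ENNReal.ofReal_ne_top) (measure_mono (hAsub j))
  -- overlap: find a pair with positive-measure intersection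
  have hexists : ∃ i₁ i₂ : Fin m, i₁ ≠ i₂ ∧ 0 < volume (A i₁ ∩ A i₂) := by
    by_contra hcon2
    push_neg at hcon2
    have hdisj : Pairwise (Function.onFun (AEDisjoint volume) A) := by
      intro i j hij
      exact le_antisymm (hcon2 i j hij) zero_le
    have hUnion := measure_iUnion₀ hdisj (fun j => (hAmeas j).nullMeasurableSet)
    rw [← hattractor] at hUnion
    rw [tsum_fintype] at hUnion
    have htr : (volume (Set.Icc x₀ x₁)).toReal = ∑ j : Fin m, (volume (A j)).toReal := by
      rw [hUnion, ENNReal.toReal_sum (fun j _ => hAvol j)]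
    rw [Real.volume_Icc, ENNReal.toReal_ofReal hL.le] at htr
    rw [htr] at hoverlap
    exact lt_irrefl _ hoverlap
  obtain ⟨i₁, i₂, hi12, hKpos⟩ := hexists
  set K : Set ℝ := A i₁ ∩ A i₂ with hKdef
  have hKmeas : MeasurableSet K := (hAmeas i₁).inter (hAmeas i₂)
  have hKsub : K ⊆ I := fun x hx => hAsub i₁ hx.1
  have hKfin : volume K ≠ ⊤ :=
    ne_top_of_le_ne_top (by rw [hvolI]; exact ENNReal.ofReal_ne_top) (measure_mono hKsub)
  set θ : ℝ := (volume K).toReal / (D * L) with hθdef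
  have hθpos : 0 < θ := by
    apply div_pos (ENNReal.toReal_pos hKpos.ne' hKfin)
    positivity
  -- injectivity
  have hinj : ∀ j, InjOn (f j) I := fun j =>
    injOn_of_abs_deriv_pos (hsmooth j) hγ₁ (fun x hx => (hbounds j x hx).1)
  -- the partition sums
  set Φ : ℕ → ENNReal := fun n => ∑ w : Fin n → Fin m,
    ∫⁻ x in I, ENNReal.ofReal |deriv (tupleMap f w) x| with hΦdef
  have hΦ0 : Φ 0 = ENNReal.ofReal L := by
    simp only [hΦdef]
    rw [Finset.univ_unique, Finset.sum_singleton]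
    have hone : ∀ x : ℝ, ENNReal.ofReal |deriv (tupleMap f (default : Fin 0 → Fin m)) x| = 1 := by
      intro x
      rw [tupleMap_zero]
      simp
    calc (∫⁻ x in I, ENNReal.ofReal |deriv (tupleMap f (default : Fin 0 → Fin m)) x|)
        = ∫⁻ _ in I, 1 := by
          apply lintegral_congr
          intro x
          exact hone x
      _ = volume I := setLIntegral_one I
      _ = ENNReal.ofReal L := hvolI
  -- per-word measurable integrand
  have hgmeas : ∀ (n : ℕ) (b : Fin n → Fin m),
      Measurable (fun x => ENNReal.ofReal |deriv (tupleMap f b) x|) :=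
    fun n b => ((hWdcont n b).abs.measurable).ennreal_ofReal
  -- recursion
  have hrec : ∀ n : ℕ, (1 + ENNReal.ofReal θ) * Φ n ≤ Φ (n+1) := by
    intro n
    have hre : Φ (n+1) = ∑ b : Fin n → Fin m, ∑ j : Fin m,
        ∫⁻ x in I, ENNReal.ofReal |deriv (tupleMap f (Fin.snoc b j)) x| := by
      simp only [hΦdef]
      rw [← Equiv.sum_comp (Fin.snocEquiv (fun _ : Fin (n+1) => Fin m))
        (fun w : Fin (n+1) → Fin m => ∫⁻ x in I, ENNReal.ofReal |deriv (tupleMap f w) x|),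
        Fintype.sum_prod_type, Finset.sum_comm]
      rfl
    rw [hre]
    simp only [hΦdef]
    rw [Finset.mul_sum]
    apply Finset.sum_le_sum
    intro b _
    set g : ℝ → ENNReal := fun x => ENNReal.ofReal |deriv (tupleMap f b) x| with hgdef
    have hg : Measurable g := hgmeas n b
    -- change of variables
    have hcov : ∀ j : Fin m, (∫⁻ x in I, ENNReal.ofReal |deriv (tupleMap f (Fin.snoc b j)) x|)
        = ∫⁻ y in A j, g y := by
      intro j
      rw [hAdef]
      rw [lintegral_image_eq_lintegral_abs_deriv_mul' hImeas
        (fun x _ => ((hdiff j).differentiableAt.hasDerivAt).hasDerivWithinAt) (hinj j) g]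
      apply setLIntegral_congr_fun hImeas
      intro x _
      beta_reduce
      rw [hWchain' n b j x, abs_mul, ENNReal.ofReal_mul (abs_nonneg _), hgdef, mul_comm]
    -- covering with overlap
    have hcover : (∫⁻ x in I, g x) + (∫⁻ x in K, g x) ≤ ∑ j : Fin m, ∫⁻ x in A j, g x := by
      have hind : ∀ (S : Set ℝ), MeasurableSet S →
          (∫⁻ x in S, g x) = ∫⁻ x, S.indicator g x := by
        intro S hS
        rw [lintegral_indicator hS]
      rw [hind I hImeas, hind K hKmeas]
      have hsum : (∑ j : Fin m, ∫⁻ x in A j, g x)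
          = ∫⁻ x, ∑ j : Fin m, (A j).indicator g x := by
        rw [lintegral_finset_sum _ (fun j _ => hg.indicator (hAmeas j))]
        exact Finset.sum_congr rfl (fun j _ => hind (A j) (hAmeas j))
      rw [hsum, ← lintegral_add_left (hg.indicator hImeas)]
      apply lintegral_mono
      intro x
      show I.indicator g x + K.indicator g x ≤ ∑ j : Fin m, (A j).indicator g x
      by_cases hxI : x ∈ I
      · by_cases hxK : x ∈ K
        · rw [Set.indicator_of_mem hxI, Set.indicator_of_mem hxK]
          have hsub : ({i₁, i₂} : Finset (Fin m)) ⊆ Finset.univ := Finset.subset_univ _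
          calc g x + g x = ∑ j ∈ ({i₁, i₂} : Finset (Fin m)), (A j).indicator g x := by
                rw [Finset.sum_pair hi12]
                rw [Set.indicator_of_mem hxK.1, Set.indicator_of_mem hxK.2]
            _ ≤ ∑ j : Fin m, (A j).indicator g x :=
                Finset.sum_le_sum_of_subset hsub
        · rw [Set.indicator_of_mem hxI, Set.indicator_of_notMem hxK, add_zero]
          have hx2 := hxI
          rw [hattractor] at hx2
          obtain ⟨j, hj⟩ := Set.mem_iUnion.1 hx2
          have hj' : x ∈ A j := hj
          calc g x = (A j).indicator g x := (Set.indicator_of_mem hj' g).symm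
            _ ≤ ∑ j : Fin m, (A j).indicator g x :=
                Finset.single_le_sum (f := fun i => (A i).indicator g x)
                  (fun i _ => zero_le) (Finset.mem_univ j)
      · rw [Set.indicator_of_notMem hxI, Set.indicator_of_notMem (fun hh => hxI (hKsub hh)),
          add_zero]
        exact zero_le
    -- distortion: lower bound for the K-integral
    set u : ℝ := sSup ((fun x => |deriv (tupleMap f b) x|) '' I) with hudef
    have himne : ((fun x => |deriv (tupleMap f b) x|) '' I).Nonempty := hIne.image _
    have hbdd : BddAbove ((fun x => |deriv (tupleMap f b) x|) '' I) := by
      refine ⟨γ₂ ^ n, ?_⟩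
      rintro v ⟨x, hx, rfl⟩
      exact (hWbounds n b x hx).2
    have hu0 : 0 ≤ u := le_trans (abs_nonneg _) (le_csSup hbdd ⟨x₀, hx₀I, rfl⟩)
    have hgleu : ∀ x ∈ I, g x ≤ ENNReal.ofReal u := by
      intro x hx
      exact ENNReal.ofReal_le_ofReal (le_csSup hbdd ⟨x, hx, rfl⟩)
    have hugeD : ∀ y ∈ K, ENNReal.ofReal (u / D) ≤ g y := by
      intro y hy
      apply ENNReal.ofReal_le_ofReal
      rw [div_le_iff₀ hD0]
      apply csSup_le himne
      rintro v ⟨x, hx, rfl⟩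
      rw [mul_comm]
      exact hdist n b x hx y (hKsub hy)
    have hIint : ∫⁻ x in I, g x ≤ ENNReal.ofReal u * ENNReal.ofReal L := by
      calc ∫⁻ x in I, g x ≤ ∫⁻ _ in I, ENNReal.ofReal u :=
          setLIntegral_mono measurable_const (fun x hx => hgleu x hx)
        _ = ENNReal.ofReal u * volume I := setLIntegral_const I _
        _ = ENNReal.ofReal u * ENNReal.ofReal L := by rw [hvolI]
    have hKint : ENNReal.ofReal (u / D) * volume K ≤ ∫⁻ x in K, g x := by
      calc ENNReal.ofReal (u / D) * volume K = ∫⁻ _ in K, ENNReal.ofReal (u / D) :=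
          (setLIntegral_const K _).symm
        _ ≤ ∫⁻ x in K, g x := setLIntegral_mono hg (fun x hx => hugeD x hx)
    have hθK : ENNReal.ofReal θ * ∫⁻ x in I, g x ≤ ∫⁻ x in K, g x := by
      calc ENNReal.ofReal θ * ∫⁻ x in I, g x
          ≤ ENNReal.ofReal θ * (ENNReal.ofReal u * ENNReal.ofReal L) :=
            mul_le_mul_right hIint _
        _ = ENNReal.ofReal (θ * (u * L)) := by
            rw [ENNReal.ofReal_mul hθpos.le, ENNReal.ofReal_mul hu0]
        _ = ENNReal.ofReal (u / D * (volume K).toReal) := by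
            congr 1
            rw [hθdef]
            field_simp
        _ = ENNReal.ofReal (u / D) * ENNReal.ofReal ((volume K).toReal) := by
            rw [ENNReal.ofReal_mul (by positivity)]
        _ = ENNReal.ofReal (u / D) * volume K := by
            rw [ENNReal.ofReal_toReal hKfin]
        _ ≤ ∫⁻ x in K, g x := hKint
    -- combine
    calc (1 + ENNReal.ofReal θ) * ∫⁻ x in I, ENNReal.ofReal |deriv (tupleMap f b) x|
        = (∫⁻ x in I, g x) + ENNReal.ofReal θ * ∫⁻ x in I, g x := by
          rw [add_mul, one_mul, hgdef]
      _ ≤ (∫⁻ x in I, g x) + ∫⁻ x in K, g x := add_le_add_right hθK _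
      _ ≤ ∑ j : Fin m, ∫⁻ x in A j, g x := hcover
      _ = ∑ j : Fin m, ∫⁻ x in I, ENNReal.ofReal |deriv (tupleMap f (Fin.snoc b j)) x| :=
          Finset.sum_congr rfl (fun j _ => (hcov j).symm)
  -- iterate
  have hΦn : ∀ n : ℕ, (1 + ENNReal.ofReal θ) ^ n * ENNReal.ofReal L ≤ Φ n := by
    intro n
    induction n with
    | zero => rw [pow_zero, one_mul, hΦ0]
    | succ n ih =>
        calc (1 + ENNReal.ofReal θ) ^ (n+1) * ENNReal.ofReal L
            = (1 + ENNReal.ofReal θ) * ((1 + ENNReal.ofReal θ) ^ n * ENNReal.ofReal L) := by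
              rw [pow_succ]; ring
          _ ≤ (1 + ENNReal.ofReal θ) * Φ n := mul_le_mul_right ih _
          _ ≤ Φ (n+1) := hrec n
  -- transfer to the sup-sums
  set E : (n : ℕ) → (Fin n → Fin m) → ℝ :=
    fun n w => sSup ((fun x => |deriv (tupleMap f w) x|) '' Set.Icc x₀ x₁) with hEdef
  have hEbounds : ∀ (n : ℕ) (w : Fin n → Fin m), γ₁ ^ n ≤ E n w ∧ E n w ≤ γ₂ ^ n := by
    intro n w
    have hbdd : BddAbove ((fun x => |deriv (tupleMap f w) x|) '' Set.Icc x₀ x₁) := by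
      refine ⟨γ₂ ^ n, ?_⟩
      rintro v ⟨x, hx, rfl⟩
      exact (hWbounds n w x hx).2
    constructor
    · exact le_trans (hWbounds n w x₀ hx₀I).1 (le_csSup hbdd ⟨x₀, hx₀I, rfl⟩)
    · exact csSup_le (hIne.image _) (by rintro v ⟨x, hx, rfl⟩; exact (hWbounds n w x hx).2)
  have hEpos : ∀ (n : ℕ) (w : Fin n → Fin m), 0 < E n w :=
    fun n w => lt_of_lt_of_le (pow_pos hγ₁ n) (hEbounds n w).1
  have hΦle : ∀ n : ℕ, Φ n ≤ ENNReal.ofReal (∑ w : Fin n → Fin m, E n w) * ENNReal.ofReal L := by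
    intro n
    simp only [hΦdef]
    rw [ENNReal.ofReal_sum_of_nonneg (fun w _ => (hEpos n w).le), Finset.sum_mul]
    apply Finset.sum_le_sum
    intro w _
    calc (∫⁻ x in I, ENNReal.ofReal |deriv (tupleMap f w) x|)
        ≤ ∫⁻ _ in I, ENNReal.ofReal (E n w) := by
          apply setLIntegral_mono measurable_const
          intro x hx
          apply ENNReal.ofReal_le_ofReal
          have hbdd : BddAbove ((fun x => |deriv (tupleMap f w) x|) '' Set.Icc x₀ x₁) := by
            refine ⟨γ₂ ^ n, ?_⟩
            rintro v ⟨z, hz, rfl⟩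
            exact (hWbounds n w z hz).2
          exact le_csSup hbdd ⟨x, hx, rfl⟩
      _ = ENNReal.ofReal (E n w) * volume I := setLIntegral_const I _
      _ = ENNReal.ofReal (E n w) * ENNReal.ofReal L := by rw [hvolI]
  have hEsum : ∀ n : ℕ, (1 + θ) ^ n ≤ ∑ w : Fin n → Fin m, E n w := by
    intro n
    have h1 : ENNReal.ofReal ((1 + θ) ^ n) * ENNReal.ofReal L
        ≤ ENNReal.ofReal (∑ w : Fin n → Fin m, E n w) * ENNReal.ofReal L := by
      have h2 : ENNReal.ofReal ((1 + θ) ^ n) = (1 + ENNReal.ofReal θ) ^ n := by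
        rw [ENNReal.ofReal_pow (by positivity)]
        congr 1
        rw [ENNReal.ofReal_add zero_le_one hθpos.le, ENNReal.ofReal_one]
      rw [h2]
      exact le_trans (hΦn n) (hΦle n)
    have hLne : ENNReal.ofReal L ≠ 0 := by
      simp [ENNReal.ofReal_eq_zero]
      linarith
    have hLne' : ENNReal.ofReal L ≠ ⊤ := ENNReal.ofReal_ne_top
    rw [ENNReal.mul_le_mul_iff_left hLne hLne'] at h1
    rw [ENNReal.ofReal_le_ofReal_iff (Finset.sum_nonneg (fun w _ => (hEpos n w).le))] at h1
    exact h1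
  -- exponent comparison: E^s ≥ E for s ≤ 1
  have hEs : ∀ n : ℕ, (1 + θ) ^ n ≤ ∑ w : Fin n → Fin m, (E n w) ^ s := by
    intro n
    refine le_trans (hEsum n) (Finset.sum_le_sum ?_)
    intro w _
    have h1 : E n w ≤ 1 := le_trans (hEbounds n w).2 (pow_le_one₀ hγ₂0.le hγ₂.le)
    calc E n w = (E n w) ^ (1:ℝ) := (Real.rpow_one _).symm
      _ ≤ (E n w) ^ s := Real.rpow_le_rpow_of_exponent_ge (hEpos n w) h1 hcon
  -- conclude
  have hfinal : ∀ᶠ n : ℕ in atTop, Real.log (1 + θ) ≤ (n : ℝ)⁻¹ * Real.log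
      (∑ w : Fin n → Fin m, (E n w) ^ s) := by
    rw [eventually_atTop]
    refine ⟨1, fun n hn => ?_⟩
    have hn0 : (0:ℝ) < n := by exact_mod_cast hn
    have hpos : (0:ℝ) < (1 + θ) ^ n := pow_pos (by linarith) n
    have hlog : Real.log ((1 + θ) ^ n) ≤ Real.log (∑ w : Fin n → Fin m, (E n w) ^ s) :=
      Real.log_le_log hpos (hEs n)
    rw [Real.log_pow] at hlog
    have h2 : (n:ℝ)⁻¹ * ((n : ℝ) * Real.log (1 + θ))
        ≤ (n : ℝ)⁻¹ * Real.log (∑ w : Fin n → Fin m, (E n w) ^ s) :=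
      mul_le_mul_of_nonneg_left hlog (by positivity)
    rw [inv_mul_cancel_left₀ (ne_of_gt hn0)] at h2
    exact h2
  have hle0 : Real.log (1 + θ) ≤ 0 := ge_of_tendsto hpressure hfinal
  have hgt0 : 0 < Real.log (1 + θ) := Real.log_pos (by linarith)
  linarith
end

section
/- Consider the family of hyperbolic IFS $\mathcal{F}^\lambda=\{f(x+\alpha), f(x+\beta+\lambda)\}$ on $X=[0,0.5]$, where $f(x)=x/(x+1)$, $0<\alpha$, and $\beta=\sqrt2-1$. For $u,v\in\{1,2\}^{\mathbb{N}}$ with $u_1=2$, $v_1=1$, write $\Pi^\lambda(u)-\Pi^\lambda(v)=f'(c)\,\Psi^\lambda(u,v)$ with $\Psi^\lambda(u,v)=\beta-\alpha+\lambda+\Pi^\lambda(\sigma u)-\Pi^\lambda(\sigma v)$. Then $\frac{d}{d\lambda}\Pi^\lambda(\sigma v) < \frac{f'(\beta+\lambda)}{1-f'(\beta+\lambda)} < 1$ for $\lambda>0$, and consequently $\frac{d}{d\lambda}\Psi^\lambda(u,v)>0$ is bounded below by a positive constant, establishing the transversality condition for this family. -/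
open Set

/-- The map `f(x) = x / (x + 1)` generating the random continued fractions. -/
noncomputable def fCF (x : ℝ) : ℝ := x / (x + 1)

open Filter Topology

lemma fCF_sub (x y : ℝ) (hx : -1 < x) (hy : -1 < y) :
    fCF x - fCF y = (x - y) / ((x+1)*(y+1)) := by
  have hx' : x + 1 ≠ 0 := by linarith
  have hy' : y + 1 ≠ 0 := by linarith
  simp only [fCF]; rw [div_sub_div _ _ hx' hy']; congr 1; ring

lemma fCF_abs_sub_le (a x y : ℝ) (ha : 0 ≤ a) (hax : a ≤ x) (hay : a ≤ y) :
    |fCF x - fCF y| ≤ (1/(1+a)^2) * |x - y| := by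
  rw [fCF_sub x y (by linarith) (by linarith), abs_div]
  have h1 : (0:ℝ) < (1+a)^2 := by positivity
  have h2 : (1+a)^2 ≤ (x+1)*(y+1) := by nlinarith
  have h3 : |(x+1)*(y+1)| = (x+1)*(y+1) := abs_of_pos (by nlinarith)
  rw [h3, div_le_iff₀ (by nlinarith)]
  rw [one_div, ← div_eq_inv_mul, div_mul_eq_mul_div, le_div_iff₀ h1]
  nlinarith [abs_nonneg (x - y)]

lemma fCF_mono (a x : ℝ) (ha : 0 ≤ a) (hax : a ≤ x) : fCF a ≤ fCF x := by
  have h := fCF_sub x a (by linarith) (by linarith)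
  have : 0 ≤ (x - a) / ((x + 1) * (a + 1)) := by
    apply div_nonneg (by linarith); nlinarith
  linarith

lemma fCF_nonneg (x : ℝ) (hx : 0 ≤ x) : 0 ≤ fCF x := by
  have := fCF_mono 0 x le_rfl hx
  simpa [fCF] using this

lemma hasDerivAt_fCF (x : ℝ) (hx : -1 < x) : HasDerivAt fCF (1/(x+1)^2) x := by
  have h : x + 1 ≠ 0 := by linarith
  have := (hasDerivAt_id x).div ((hasDerivAt_id x).add_const 1) h
  refine HasDerivAt.congr_deriv (f := fCF) this ?_
  simp only [id_eq]; ring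

lemma key_lip (α bU : ℝ) (hα : 0 < α)
    (proj : ℝ → (ℕ → Fin 2) → ℝ)
    (hrange : ∀ lam ∈ Set.Ioo (0:ℝ) bU, ∀ w : ℕ → Fin 2, proj lam w ∈ Set.Icc (0:ℝ) (1/2))
    (hfix : ∀ lam ∈ Set.Ioo (0:ℝ) bU, ∀ w : ℕ → Fin 2,
      proj lam w = if w 0 = 0 then fCF (proj lam (fun i => w (i+1)) + α)
        else fCF (proj lam (fun i => w (i+1)) + (Real.sqrt 2 - 1) + lam))
    (c : ℝ) (hc : 0 < c)
    (hlb : ∀ lam ∈ Set.Ioo (0:ℝ) bU, ∀ w : ℕ → Fin 2, c ≤ proj lam w)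
    (a s t : ℝ) (ha : 0 < a) (has : a ≤ s) (hat : a ≤ t) (hst : s ≤ t)
    (hs : s ∈ Set.Ioo (0:ℝ) bU) (ht : t ∈ Set.Ioo (0:ℝ) bU) (w : ℕ → Fin 2) :
    |proj t w - proj s w| ≤
      (1/(1+(c+(Real.sqrt 2 - 1)+a))^2) / (1 - 1/(1+(c+(Real.sqrt 2 - 1)+a))^2) * (t - s) := by
  have hβ : 0 < Real.sqrt 2 - 1 := by
    nlinarith [Real.sq_sqrt (by norm_num : (0:ℝ) ≤ 2), Real.sqrt_nonneg 2]
  set β := Real.sqrt 2 - 1 with hβdef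
  set κ : ℝ := 1/(1+(c+β+a))^2 with hκdef
  have hden : 1 < 1+(c+β+a) := by linarith
  have hκ0 : 0 < κ := by positivity
  have hκ1 : κ < 1 := by
    rw [hκdef, div_lt_one (by positivity)]
    nlinarith
  set ρ : ℝ := 1/(1+α)^2 with hρdef
  have hρ0 : 0 < ρ := by positivity
  have hρ1 : ρ < 1 := by
    rw [hρdef, div_lt_one (by positivity)]
    nlinarith
  set L : ℝ := max ρ κ with hLdef
  have hL0 : 0 ≤ L := le_trans hρ0.le (le_max_left _ _)
  have hL1 : L < 1 := max_lt hρ1 hκ1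
  set C : ℝ := κ/(1-κ) with hCdef
  have hC0 : 0 ≤ C := div_nonneg hκ0.le (by linarith)
  have h1κ : (0:ℝ) < 1 - κ := by linarith
  have hCmul : C * (1 - κ) = κ := div_mul_cancel₀ κ h1κ.ne'
  have hCeq : κ * (C + 1) = C := by linear_combination (-1 : ℝ) * hCmul
  have hts : 0 ≤ t - s := by linarith
  have H : ∀ n : ℕ, ∀ w : ℕ → Fin 2,
      |proj t w - proj s w| ≤ L^n * (1/2) + C * (t - s) := by
    intro n
    induction n with
    | zero =>
      intro w
      have h1 := hrange t ht w
      have h2 := hrange s hs w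
      have habs : |proj t w - proj s w| ≤ 1/2 :=
        abs_sub_le_iff.2 ⟨by linarith [h1.1, h1.2, h2.1, h2.2],
          by linarith [h1.1, h1.2, h2.1, h2.2]⟩
      have h3 : 0 ≤ C * (t - s) := mul_nonneg hC0 hts
      rw [pow_zero, one_mul]
      linarith
    | succ n ih =>
      intro w
      have hps : (0:ℝ) ≤ proj s (fun i => w (i+1)) := (hrange s hs _).1
      have hpt : (0:ℝ) ≤ proj t (fun i => w (i+1)) := (hrange t ht _).1
      have hcs : c ≤ proj s (fun i => w (i+1)) := hlb s hs _
      have hct : c ≤ proj t (fun i => w (i+1)) := hlb t ht _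
      have hrec := ih (fun i => w (i+1))
      have hpow : (0:ℝ) ≤ L^n := pow_nonneg hL0 n
      rw [hfix t ht w, hfix s hs w]
      by_cases h0 : w 0 = 0
      · rw [if_pos h0, if_pos h0]
        have hb := fCF_abs_sub_le α (proj t (fun i => w (i+1)) + α)
          (proj s (fun i => w (i+1)) + α) hα.le (by linarith) (by linarith)
        have heq : (proj t (fun i => w (i+1)) + α) - (proj s (fun i => w (i+1)) + α)
            = proj t (fun i => w (i+1)) - proj s (fun i => w (i+1)) := by ring
        rw [heq] at hb
        have hρL : ρ ≤ L := le_max_left _ _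
        have h1 : ρ * |proj t (fun i => w (i+1)) - proj s (fun i => w (i+1))|
            ≤ ρ * (L^n * (1/2) + C * (t-s)) := mul_le_mul_of_nonneg_left hrec hρ0.le
        have hCt : 0 ≤ C * (t - s) := mul_nonneg hC0 hts
        have : 1/(1+α)^2 = ρ := rfl
        rw [this] at hb
        have h2 : ρ * (L^n * (1/2) + C * (t-s)) ≤ L^(n+1) * (1/2) + C * (t-s) := by
          calc ρ * (L^n * (1/2) + C * (t-s)) = ρ * (L^n * (1/2)) + ρ * (C * (t-s)) := by ring
            _ ≤ L * (L^n * (1/2)) + 1 * (C * (t-s)) :=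
                add_le_add (mul_le_mul_of_nonneg_right hρL (mul_nonneg hpow (by norm_num)))
                  (mul_le_mul_of_nonneg_right hρ1.le hCt)
            _ = L^(n+1) * (1/2) + C * (t-s) := by ring
        linarith
      · rw [if_neg h0, if_neg h0]
        have hb := fCF_abs_sub_le (c+β+a) (proj t (fun i => w (i+1)) + β + t)
          (proj s (fun i => w (i+1)) + β + s) (by positivity) (by linarith) (by linarith)
        have hbb : 1/(1+(c+β+a))^2 = κ := rfl
        rw [hbb] at hb
        have htri : |(proj t (fun i => w (i+1)) + β + t) - (proj s (fun i => w (i+1)) + β + s)|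
            ≤ |proj t (fun i => w (i+1)) - proj s (fun i => w (i+1))| + (t - s) := by
          have heq2 : (proj t (fun i => w (i+1)) + β + t) - (proj s (fun i => w (i+1)) + β + s)
              = (proj t (fun i => w (i+1)) - proj s (fun i => w (i+1))) + (t - s) := by ring
          rw [heq2]
          calc |(proj t (fun i => w (i+1)) - proj s (fun i => w (i+1))) + (t - s)|
              ≤ |proj t (fun i => w (i+1)) - proj s (fun i => w (i+1))| + |t - s| := abs_add_le _ _
            _ = _ + (t - s) := by rw [abs_of_nonneg hts]
        have hκL : κ ≤ L := le_max_right _ _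
        have h1 : κ * |(proj t (fun i => w (i+1)) + β + t) - (proj s (fun i => w (i+1)) + β + s)|
            ≤ κ * (L^n * (1/2) + C * (t-s) + (t-s)) := by
          apply mul_le_mul_of_nonneg_left _ hκ0.le
          linarith
        have h2 : κ * (L^n * (1/2) + C * (t-s) + (t-s)) ≤ L^(n+1) * (1/2) + C * (t-s) := by
          have hκC : κ * (C * (t-s) + (t-s)) = C * (t-s) := by
            have h4 : κ * (C * (t-s) + (t-s)) = (κ * (C+1)) * (t-s) := by ring
            rw [h4, hCeq]
          calc κ * (L^n * (1/2) + C * (t-s) + (t-s))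
              = κ * (L^n * (1/2)) + κ * (C * (t-s) + (t-s)) := by ring
            _ = κ * (L^n * (1/2)) + C * (t-s) := by rw [hκC]
            _ ≤ L * (L^n * (1/2)) + C * (t-s) :=
                add_le_add (mul_le_mul_of_nonneg_right hκL (mul_nonneg hpow (by norm_num))) le_rfl
            _ = L^(n+1) * (1/2) + C * (t-s) := by ring
        linarith
  have hlim : Tendsto (fun n : ℕ => L^n * (1/2) + C * (t-s)) atTop
      (𝓝 (0 * (1/2) + C * (t-s))) :=
    ((tendsto_pow_atTop_nhds_zero_of_lt_one hL0 hL1).mul_const _).add_const _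
  have := ge_of_tendsto' hlim (fun n => H n w)
  simpa using this

lemma ratio_lt_ratio (x y : ℝ) (hx : 0 ≤ x) (hxy : x < y) (hy : y < 1) :
    x/(1-x) < y/(1-y) := by
  rw [div_lt_div_iff₀ (by linarith) (by linarith)]
  nlinarith

lemma ratio_le_ratio (x y : ℝ) (hx : 0 ≤ x) (hxy : x ≤ y) (hy : y < 1) :
    x/(1-x) ≤ y/(1-y) := by
  rw [div_le_div_iff₀ (by linarith) (by linarith)]
  nlinarith

/-- For the family `𝓕^λ = {f(x+α), f(x+β+λ)}` on `X = [0, 1/2]` with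
`f(x) = x/(x+1)`, `0 < α` and `β = √2 - 1`: the natural projection satisfies
`d/dλ Π^λ(w) < f'(β+λ)/(1 - f'(β+λ)) < 1` for `λ > 0`, and consequently
`d/dλ Ψ^λ(u,v) = 1 + d/dλ Π^λ(σu) - d/dλ Π^λ(σv)` (for `u₁ = 2`, `v₁ = 1`) is bounded
below by a positive constant — establishing transversality for this family. -/
theorem random_continued_fractions_transversality
    (α bU : ℝ) (hα : 0 < α) (hbU : 0 < bU)
    (proj dproj : ℝ → (ℕ → Fin 2) → ℝ)
    (hrange : ∀ lam ∈ Set.Ioo (0:ℝ) bU, ∀ w : ℕ → Fin 2,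
      proj lam w ∈ Set.Icc (0:ℝ) (1/2))
    (hfix : ∀ lam ∈ Set.Ioo (0:ℝ) bU, ∀ w : ℕ → Fin 2,
      proj lam w = if w 0 = 0 then fCF (proj lam (fun i => w (i+1)) + α)
        else fCF (proj lam (fun i => w (i+1)) + (Real.sqrt 2 - 1) + lam))
    (hderiv : ∀ w : ℕ → Fin 2, ∀ lam ∈ Set.Ioo (0:ℝ) bU,
      HasDerivAt (fun t => proj t w) (dproj lam w) lam)
    (hmono : ∀ lam ∈ Set.Ioo (0:ℝ) bU, ∀ w : ℕ → Fin 2, 0 ≤ dproj lam w) :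
    (∀ lam ∈ Set.Ioo (0:ℝ) bU, ∀ w : ℕ → Fin 2,
      dproj lam w <
          deriv fCF ((Real.sqrt 2 - 1) + lam) / (1 - deriv fCF ((Real.sqrt 2 - 1) + lam))
        ∧ deriv fCF ((Real.sqrt 2 - 1) + lam) /
            (1 - deriv fCF ((Real.sqrt 2 - 1) + lam)) < 1)
    ∧ ∃ ε > 0, ∀ lam ∈ Set.Ioo (0:ℝ) bU, ∀ u v : ℕ → Fin 2,
        u 0 = 1 → v 0 = 0 →
        ε ≤ 1 + dproj lam (fun i => u (i+1)) - dproj lam (fun i => v (i+1)) := by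
  have hs2 : (1:ℝ) < Real.sqrt 2 := by
    nlinarith [Real.sq_sqrt (by norm_num : (0:ℝ) ≤ 2), Real.sqrt_nonneg 2]
  have hβ : 0 < Real.sqrt 2 - 1 := by linarith
  set c : ℝ := fCF (min α (Real.sqrt 2 - 1)) with hcdef
  have hmin0 : 0 < min α (Real.sqrt 2 - 1) := lt_min hα hβ
  have hc : 0 < c := by
    rw [hcdef]
    unfold fCF
    apply div_pos hmin0
    linarith
  -- lower bound on projections
  have hlb : ∀ lam ∈ Set.Ioo (0:ℝ) bU, ∀ w : ℕ → Fin 2, c ≤ proj lam w := by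
    intro lam hlam w
    rw [hfix lam hlam w]
    have hp : (0:ℝ) ≤ proj lam (fun i => w (i+1)) := (hrange lam hlam _).1
    by_cases h0 : w 0 = 0
    · rw [if_pos h0]
      exact fCF_mono _ _ hmin0.le
        (by linarith [min_le_left α (Real.sqrt 2 - 1)])
    · rw [if_neg h0]
      exact fCF_mono _ _ hmin0.le
        (by linarith [min_le_right α (Real.sqrt 2 - 1), hlam.1])
  -- derivative bound via Lipschitz estimate
  have hdb : ∀ lam ∈ Set.Ioo (0:ℝ) bU, ∀ w : ℕ → Fin 2,
      dproj lam w ≤ (1/(1+(c+(Real.sqrt 2 - 1)+(lam - min lam c / 2)))^2) /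
        (1 - 1/(1+(c+(Real.sqrt 2 - 1)+(lam - min lam c / 2)))^2) := by
    intro lam hlam w
    set δ : ℝ := min lam c / 2 with hδdef
    have hδ0 : 0 < δ := by
      rw [hδdef]
      have := lt_min hlam.1 hc
      linarith
    have hδlam : δ ≤ lam / 2 := by
      rw [hδdef]
      have := min_le_left lam c
      linarith
    set a : ℝ := lam - δ with hadef
    have ha : 0 < a := by rw [hadef]; linarith [hlam.1]
    set δ' : ℝ := min δ (bU - lam) with hδ'def
    have hδ'0 : 0 < δ' := lt_min hδ0 (by linarith [hlam.2])
    have hδ'δ : δ' ≤ δ := min_le_left _ _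
    have hδ'b : δ' ≤ bU - lam := min_le_right _ _
    have hmem : Set.Ioo (lam - δ') (lam + δ') ∈ nhds lam :=
      Ioo_mem_nhds (by linarith) (by linarith)
    have hT := hasDerivAt_iff_tendsto_slope.1 (hderiv w lam hlam)
    refine le_of_tendsto hT ?_
    filter_upwards [mem_nhdsWithin_of_mem_nhds hmem, self_mem_nhdsWithin] with t htI htne
    have htne' : t ≠ lam := htne
    have hta : a < t := by
      have := htI.1; rw [hadef]; linarith
    have htb : t < bU := by linarith [htI.2]
    have ht0 : (0:ℝ) < t := lt_trans ha hta
    have hset : t ∈ Set.Ioo (0:ℝ) bU := ⟨ht0, htb⟩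
    have habs : |proj t w - proj lam w| ≤
        (1/(1+(c+(Real.sqrt 2 - 1)+a))^2) /
          (1 - 1/(1+(c+(Real.sqrt 2 - 1)+a))^2) * |t - lam| := by
      rcases le_total lam t with h | h
      · have hk := key_lip α bU hα proj hrange hfix c hc hlb a lam t ha (by linarith)
          hta.le h hlam hset w
        rwa [abs_of_nonneg (by linarith : (0:ℝ) ≤ t - lam)]
      · have hk := key_lip α bU hα proj hrange hfix c hc hlb a t lam ha hta.le
          (by linarith) h hset hlam w
        rw [abs_sub_comm] at hk
        rwa [abs_of_nonpos (by linarith : t - lam ≤ 0), neg_sub]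
    have hden : t - lam ≠ 0 := sub_ne_zero.2 htne'
    calc slope (fun t => proj t w) lam t
        = (proj t w - proj lam w) / (t - lam) := slope_def_field _ _ _
      _ ≤ |(proj t w - proj lam w) / (t - lam)| := le_abs_self _
      _ = |proj t w - proj lam w| / |t - lam| := abs_div _ _
      _ ≤ _ := by
          rw [div_le_iff₀ (abs_pos.2 hden)]
          exact habs
  -- common facts
  have hcommon : ∀ lam ∈ Set.Ioo (0:ℝ) bU,
      0 < 1/(1+(c+(Real.sqrt 2 - 1)+(lam - min lam c / 2)))^2 ∧
      1/(1+(c+(Real.sqrt 2 - 1)+(lam - min lam c / 2)))^2 ≤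
        1/(1+((Real.sqrt 2 - 1)+c/2))^2 := by
    intro lam hlam
    have hδc : min lam c / 2 ≤ c / 2 := by
      have := min_le_right lam c; linarith
    have hbase : (0:ℝ) < 1+(c+(Real.sqrt 2 - 1)+(lam - min lam c / 2)) := by
      have h5 := min_le_left lam c
      have h6 := hlam.1
      linarith
    have hbase0 : (0:ℝ) < 1+((Real.sqrt 2 - 1)+c/2) := by linarith
    constructor
    · exact one_div_pos.2 (pow_pos hbase 2)
    · apply one_div_le_one_div_of_le (pow_pos hbase0 2)
      have h1 : 1+((Real.sqrt 2 - 1)+c/2) ≤ 1+(c+(Real.sqrt 2 - 1)+(lam - min lam c / 2)) := by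
        have := min_le_right lam c
        have := hlam.1
        linarith
      have h0 : (0:ℝ) ≤ 1+((Real.sqrt 2 - 1)+c/2) := by positivity
      nlinarith
  have hκ₀half : 1/(1+((Real.sqrt 2 - 1)+c/2))^2 < 1/2 := by
    have hbase0 : (0:ℝ) < 1+((Real.sqrt 2 - 1)+c/2) := by linarith
    rw [div_lt_div_iff₀ (pow_pos hbase0 2) (by norm_num)]
    nlinarith [Real.sq_sqrt (by norm_num : (0:ℝ) ≤ 2)]
  constructor
  · intro lam hlam w
    have hK : deriv fCF ((Real.sqrt 2 - 1) + lam) = 1/(((Real.sqrt 2 - 1) + lam)+1)^2 :=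
      (hasDerivAt_fCF _ (by linarith [hlam.1])).deriv
    have hKval : (Real.sqrt 2 - 1) + lam + 1 = Real.sqrt 2 + lam := by ring
    have hK2 : deriv fCF ((Real.sqrt 2 - 1) + lam) < 1/2 := by
      have hb2 : (0:ℝ) < Real.sqrt 2 + lam := by linarith [hlam.1]
      rw [hK, hKval, div_lt_div_iff₀ (pow_pos hb2 2) (by norm_num)]
      nlinarith [Real.sq_sqrt (by norm_num : (0:ℝ) ≤ 2), hlam.1, Real.sqrt_nonneg 2]
    have hK0 : 0 < deriv fCF ((Real.sqrt 2 - 1) + lam) := by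
      rw [hK, hKval]
      have hb2 : (0:ℝ) < Real.sqrt 2 + lam := by linarith [hlam.1]
      exact one_div_pos.2 (pow_pos hb2 2)
    have hδc : min lam c / 2 < c := by
      have := min_le_right lam c; linarith
    have hκaK : 1/(1+(c+(Real.sqrt 2 - 1)+(lam - min lam c / 2)))^2
        < deriv fCF ((Real.sqrt 2 - 1) + lam) := by
      rw [hK]
      apply one_div_lt_one_div_of_lt (pow_pos (by linarith [hlam.1] : (0:ℝ) < (Real.sqrt 2 - 1) + lam + 1) 2)
      have h1 : (Real.sqrt 2 - 1) + lam + 1 < 1+(c+(Real.sqrt 2 - 1)+(lam - min lam c / 2)) := by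
        linarith
      have h0 : (0:ℝ) < (Real.sqrt 2 - 1) + lam + 1 := by linarith [hlam.1]
      nlinarith
    have h1 := hdb lam hlam w
    have h2 := (hcommon lam hlam).1
    constructor
    · calc dproj lam w ≤ _ := h1
        _ < _ := ratio_lt_ratio _ _ h2.le hκaK (by linarith)
    · rw [div_lt_one (by linarith)]
      linarith
  · refine ⟨1 - (1/(1+((Real.sqrt 2 - 1)+c/2))^2) /
      (1 - 1/(1+((Real.sqrt 2 - 1)+c/2))^2), ?_, ?_⟩
    · have h0 : (0:ℝ) < 1/(1+((Real.sqrt 2 - 1)+c/2))^2 := by positivity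
      have : (1/(1+((Real.sqrt 2 - 1)+c/2))^2) /
          (1 - 1/(1+((Real.sqrt 2 - 1)+c/2))^2) < 1 := by
        rw [div_lt_one (by linarith)]
        linarith
      linarith
    · intro lam hlam u v hu hv
      have h1 := hdb lam hlam (fun i => v (i+1))
      have h2 := (hcommon lam hlam)
      have h3 : (1/(1+(c+(Real.sqrt 2 - 1)+(lam - min lam c / 2)))^2) /
          (1 - 1/(1+(c+(Real.sqrt 2 - 1)+(lam - min lam c / 2)))^2) ≤
          (1/(1+((Real.sqrt 2 - 1)+c/2))^2) /
          (1 - 1/(1+((Real.sqrt 2 - 1)+c/2))^2) :=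
        ratio_le_ratio _ _ h2.1.le h2.2 (by linarith)
      have h4 := hmono lam hlam (fun i => u (i+1))
      linarith
end

section
/- (Vertical translation family transversality.) Let $\{f_j\}_{j\in\mathcal{A}}$ be a $C^{1+\delta}$ IFS on $X$ with $0<\gamma_1\le|f_j'|\le\gamma_2<1$, and consider $f^\lambda_j(x)=f_j(x)+a_j(\lambda)$ with $C^1$ functions $a_j$ on $\overline{U}$. Define $D_{\max}=\max_i \|\tfrac{d}{d\lambda}a_i\|_\infty/(1-\|f_i'\|_\infty)$ and for $i\ne j$ with nonempty overlap region $X_{ij}$, $\eta_{ij}=\min_\lambda|\tfrac{d}{d\lambda}(a_i(\lambda)-a_j(\lambda))|$. If $\eta_{ij} - (\|f_i'\|_{X_{ij}}+\|f_j'\|_{X_{ji}})\,D_{\max} > 0$ for all $i\ne j$ with $X_{ij}\ne\emptyset$, then the transversality condition holds on $U$: whenever $\Pi^\lambda(u)=\Pi^\lambda(v)$ with $u_1\ne v_1$, $|\tfrac{d}{d\lambda}(\Pi^\lambda(u)-\Pi^\lambda(v))|$ is bounded below by a positive constant independent of $u,v,\lambda$. -/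
open Set

/-- The overlap region `X_{ij} = {x ∈ X : ∃ λ ∈ [c,d], ∃ y ∈ X, f^λ_i(x) = f^λ_j(y)}`
for the vertical translation family `f^λ_j = f_j + a_j(λ)`. -/
def overlapSet {m : ℕ} (f g : Fin m → ℝ → ℝ) (x₀ x₁ c d : ℝ) (i j : Fin m) : Set ℝ :=
  {x ∈ Set.Icc x₀ x₁ | ∃ lam ∈ Set.Icc c d, ∃ y ∈ Set.Icc x₀ x₁,
    f i x + g i lam = f j y + g j lam}

/-- Transversality for vertical translation families
`f^λ_j(x) = f_j(x) + a_j(λ)`.  With `D_max = max_i ‖a_i'‖_∞/(1-‖f_i'‖_∞)` and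
`η_{ij} = min_λ |a_i'(λ) - a_j'(λ)|`, if
`η_{ij} - (‖f_i'‖_{X_{ij}} + ‖f_j'‖_{X_{ji}}) D_max > 0` for all `i ≠ j` with
`X_{ij} ≠ ∅`, then transversality holds on `U`: whenever `Π^λ(u) = Π^λ(v)` with
`u₁ ≠ v₁`, the derivative `|d/dλ(Π^λ(u) - Π^λ(v))|` is bounded below by a positive
constant independent of `u, v, λ`. -/
theorem vertical_translation_family_transversality
    {m : ℕ} (f g : Fin m → ℝ → ℝ) (x₀ x₁ c d Dmax : ℝ)
    (ρ La : Fin m → ℝ)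
    (hcd : c < d) (hX : x₀ ≤ x₁)
    (hfd : ∀ j, Differentiable ℝ (f j))
    (hgd : ∀ j, Differentiable ℝ (g j))
    (hρ0 : ∀ j, 0 ≤ ρ j) (hρ : ∀ j, ρ j < 1)
    (hf : ∀ j x, |deriv (f j) x| ≤ ρ j)
    (hLa : ∀ j, ∀ lam ∈ Set.Icc c d, |deriv (g j) lam| ≤ La j)
    (hDmax : ∀ j, La j / (1 - ρ j) ≤ Dmax)
    (proj dproj : ℝ → (ℕ → Fin m) → ℝ)
    (hrange : ∀ lam ∈ Set.Icc c d, ∀ u : ℕ → Fin m, proj lam u ∈ Set.Icc x₀ x₁)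
    (hfix : ∀ lam ∈ Set.Icc c d, ∀ u : ℕ → Fin m,
      proj lam u = f (u 0) (proj lam (fun i => u (i+1))) + g (u 0) lam)
    (hderiv : ∀ u : ℕ → Fin m, ∀ lam ∈ Set.Icc c d,
      HasDerivAt (fun t => proj t u) (dproj lam u) lam)
    (hchain : ∀ lam ∈ Set.Icc c d, ∀ u : ℕ → Fin m,
      dproj lam u = deriv (g (u 0)) lam
        + deriv (f (u 0)) (proj lam (fun i => u (i+1))) * dproj lam (fun i => u (i+1)))
    (hbdd : ∃ M, ∀ lam ∈ Set.Icc c d, ∀ u : ℕ → Fin m, |dproj lam u| ≤ M)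
    (hcond : ∀ i j : Fin m, i ≠ j → (overlapSet f g x₀ x₁ c d i j).Nonempty →
      (sSup ((fun x => |deriv (f i) x|) '' overlapSet f g x₀ x₁ c d i j)
          + sSup ((fun x => |deriv (f j) x|) '' overlapSet f g x₀ x₁ c d j i)) * Dmax
        < sInf ((fun lam => |deriv (g i) lam - deriv (g j) lam|) '' Set.Icc c d)) :
    ∃ ε > 0, ∀ lam ∈ Set.Ioo c d, ∀ u v : ℕ → Fin m, u 0 ≠ v 0 →
      proj lam u = proj lam v → ε ≤ |dproj lam u - dproj lam v| := by

  classical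
  obtain ⟨M, hM⟩ := hbdd
  have hccd : c ∈ Set.Icc c d := ⟨le_refl c, hcd.le⟩
  rcases Nat.eq_zero_or_pos m with hm | hm
  · subst hm
    exact ⟨1, one_pos, fun lam _ u => (u 0).elim0⟩
  haveI hne : Nonempty (Fin m) := ⟨⟨0, hm⟩⟩
  have hρ1 : ∀ j, (0:ℝ) < 1 - ρ j := fun j => by linarith [hρ j]
  have hLa0 : ∀ j, 0 ≤ La j := fun j => le_trans (abs_nonneg _) (hLa j c hccd)
  have hDmax0 : 0 ≤ Dmax :=
    le_trans (div_nonneg (hLa0 ⟨0, hm⟩) (hρ1 ⟨0, hm⟩).le) (hDmax ⟨0, hm⟩)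
  set r : ℝ := Finset.univ.sup' Finset.univ_nonempty ρ with hr
  have hrρ : ∀ j, ρ j ≤ r := fun j => Finset.le_sup' ρ (Finset.mem_univ j)
  have hr0 : 0 ≤ r := le_trans (hρ0 _) (hrρ ⟨0, hm⟩)
  have hr1 : r < 1 := by
    obtain ⟨j, -, hj⟩ := Finset.exists_mem_eq_sup' Finset.univ_nonempty ρ
    rw [hr, hj]; exact hρ j
  -- a priori bound `|dproj lam u| ≤ Dmax`
  have key : ∀ lam ∈ Set.Icc c d, ∀ u, |dproj lam u| ≤ Dmax := by
    intro lam hlam u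
    set e0 : ℝ := max (M - Dmax) 0 with he0
    have he00 : 0 ≤ e0 := le_max_right _ _
    have step : ∀ n : ℕ, ∀ u, |dproj lam u| ≤ Dmax + r ^ n * e0 := by
      intro n
      induction n with
      | zero =>
        intro u
        have h1 : M - Dmax ≤ e0 := le_max_left _ _
        have := hM lam hlam u
        simp only [pow_zero, one_mul]
        linarith
      | succ n ih =>
        intro u
        rw [hchain lam hlam u]
        have h1 : |deriv (g (u 0)) lam| ≤ Dmax * (1 - ρ (u 0)) :=
          le_trans (hLa (u 0) lam hlam) ((div_le_iff₀ (hρ1 (u 0))).mp (hDmax (u 0)))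
        have h2 : |deriv (f (u 0)) (proj lam fun i => u (i+1))| ≤ ρ (u 0) := hf _ _
        have h3 := ih (fun i => u (i+1))
        have h4 : |deriv (g (u 0)) lam + deriv (f (u 0)) (proj lam fun i => u (i+1)) *
            dproj lam (fun i => u (i+1))|
            ≤ |deriv (g (u 0)) lam| + |deriv (f (u 0)) (proj lam fun i => u (i+1))| *
              |dproj lam (fun i => u (i+1))| := by
          calc _ ≤ |deriv (g (u 0)) lam| + |deriv (f (u 0)) (proj lam fun i => u (i+1)) *
              dproj lam (fun i => u (i+1))| := abs_add_le _ _
          _ = _ := by rw [abs_mul]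
        have h5 : ρ (u 0) ≤ r := hrρ (u 0)
        have h6 : (0:ℝ) ≤ ρ (u 0) := hρ0 (u 0)
        have h7 : (0:ℝ) ≤ r ^ n := pow_nonneg hr0 n
        have h8 : (0:ℝ) ≤ |dproj lam (fun i => u (i+1))| := abs_nonneg _
        have p1 : |deriv (f (u 0)) (proj lam fun i => u (i+1))| *
            |dproj lam (fun i => u (i+1))| ≤ ρ (u 0) * (Dmax + r ^ n * e0) :=
          mul_le_mul h2 h3 h8 h6
        have p2 : ρ (u 0) * (r ^ n * e0) ≤ r * (r ^ n * e0) :=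
          mul_le_mul_of_nonneg_right h5 (mul_nonneg h7 he00)
        calc |deriv (g (u 0)) lam + deriv (f (u 0)) (proj lam fun i => u (i+1)) *
            dproj lam (fun i => u (i+1))|
            ≤ |deriv (g (u 0)) lam| + |deriv (f (u 0)) (proj lam fun i => u (i+1))| *
              |dproj lam (fun i => u (i+1))| := h4
        _ ≤ Dmax * (1 - ρ (u 0)) + ρ (u 0) * (Dmax + r ^ n * e0) := add_le_add h1 p1
        _ = Dmax + ρ (u 0) * (r ^ n * e0) := by ring
        _ ≤ Dmax + r * (r ^ n * e0) := by linarith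
        _ = Dmax + r ^ (n + 1) * e0 := by rw [pow_succ']; ring
    have hT : Filter.Tendsto (fun n : ℕ => Dmax + r ^ n * e0) Filter.atTop (nhds (Dmax + 0 * e0)) :=
      Filter.Tendsto.add tendsto_const_nhds
        (((tendsto_pow_atTop_nhds_zero_of_lt_one hr0 hr1)).mul_const e0)
    have := ge_of_tendsto' hT (fun n => step n u)
    simpa using this
  -- quantities
  set S : Fin m → Fin m → ℝ := fun i j =>
    sSup ((fun x => |deriv (f i) x|) '' overlapSet f g x₀ x₁ c d i j) with hS
  set η : Fin m → Fin m → ℝ := fun i j =>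
    sInf ((fun lam => |deriv (g i) lam - deriv (g j) lam|) '' Set.Icc c d) with hη
  set gap : Fin m → Fin m → ℝ := fun i j =>
    if i ≠ j ∧ (overlapSet f g x₀ x₁ c d i j).Nonempty then
      η i j - (S i j + S j i) * Dmax else 1 with hgapdef
  have gap_pos : ∀ i j, 0 < gap i j := by
    intro i j
    by_cases h : i ≠ j ∧ (overlapSet f g x₀ x₁ c d i j).Nonempty
    · have := hcond i j h.1 h.2
      simp only [hgapdef, if_pos h]
      rw [hS, hη]
      linarith
    · simp only [hgapdef, if_neg h]
      exact one_pos
  refine ⟨Finset.univ.inf' Finset.univ_nonempty (fun p : Fin m × Fin m => gap p.1 p.2), ?_, ?_⟩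
  · exact (Finset.lt_inf'_iff _).mpr (fun p _ => gap_pos p.1 p.2)
  intro lam hlam u v huv heq
  have hlam' : lam ∈ Set.Icc c d := Set.Ioo_subset_Icc_self hlam
  have hxI : proj lam (fun k => u (k+1)) ∈ Set.Icc x₀ x₁ := hrange lam hlam' _
  have hyI : proj lam (fun k => v (k+1)) ∈ Set.Icc x₀ x₁ := hrange lam hlam' _
  have hfeq : f (u 0) (proj lam (fun k => u (k+1))) + g (u 0) lam
      = f (v 0) (proj lam (fun k => v (k+1))) + g (v 0) lam := by
    rw [← hfix lam hlam' u, ← hfix lam hlam' v]; exact heq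
  have hxmem : proj lam (fun k => u (k+1)) ∈ overlapSet f g x₀ x₁ c d (u 0) (v 0) :=
    ⟨hxI, lam, hlam', proj lam (fun k => v (k+1)), hyI, hfeq⟩
  have hymem : proj lam (fun k => v (k+1)) ∈ overlapSet f g x₀ x₁ c d (v 0) (u 0) :=
    ⟨hyI, lam, hlam', proj lam (fun k => u (k+1)), hxI, hfeq.symm⟩
  have hSx : |deriv (f (u 0)) (proj lam (fun k => u (k+1)))| ≤ S (u 0) (v 0) :=
    le_csSup ⟨ρ (u 0), fun z ⟨x, _, hz⟩ => hz ▸ hf (u 0) x⟩ ⟨_, hxmem, rfl⟩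
  have hSy : |deriv (f (v 0)) (proj lam (fun k => v (k+1)))| ≤ S (v 0) (u 0) :=
    le_csSup ⟨ρ (v 0), fun z ⟨x, _, hz⟩ => hz ▸ hf (v 0) x⟩ ⟨_, hymem, rfl⟩
  have hηle : η (u 0) (v 0) ≤ |deriv (g (u 0)) lam - deriv (g (v 0)) lam| :=
    csInf_le ⟨0, fun z ⟨t, _, hz⟩ => hz ▸ abs_nonneg _⟩ ⟨lam, hlam', rfl⟩
  have hnon : (overlapSet f g x₀ x₁ c d (u 0) (v 0)).Nonempty := ⟨_, hxmem⟩
  have hgap : gap (u 0) (v 0) = η (u 0) (v 0) - (S (u 0) (v 0) + S (v 0) (u 0)) * Dmax := by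
    simp only [hgapdef]
    rw [if_pos ⟨huv, hnon⟩]
  have hεgap : Finset.univ.inf' Finset.univ_nonempty (fun p : Fin m × Fin m => gap p.1 p.2)
      ≤ gap (u 0) (v 0) := Finset.inf'_le _ (Finset.mem_univ (u 0, v 0))
  have hdu : |dproj lam (fun k => u (k+1))| ≤ Dmax := key lam hlam' _
  have hdv : |dproj lam (fun k => v (k+1))| ≤ Dmax := key lam hlam' _
  rw [hchain lam hlam' u, hchain lam hlam' v]
  set A := deriv (g (u 0)) lam
  set B := deriv (f (u 0)) (proj lam (fun k => u (k+1))) * dproj lam (fun k => u (k+1)) with hB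
  set C := deriv (g (v 0)) lam
  set D := deriv (f (v 0)) (proj lam (fun k => v (k+1))) * dproj lam (fun k => v (k+1)) with hD
  have hAC : |A - C| ≤ |A + B - (C + D)| + (|B| + |D|) := by
    have h1 : A - C = (A + B - (C + D)) + (D - B) := by ring
    have hDB : |D - B| ≤ |D| + |B| := by
      calc |D - B| = |D + -B| := by rw [sub_eq_add_neg]
      _ ≤ |D| + |-B| := abs_add_le _ _
      _ = |D| + |B| := by rw [abs_neg]
    calc |A - C| = |(A + B - (C + D)) + (D - B)| := by rw [← h1]
    _ ≤ |A + B - (C + D)| + |D - B| := abs_add_le _ _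
    _ ≤ |A + B - (C + D)| + (|D| + |B|) := by linarith
    _ = _ := by ring
  have hB' : |B| ≤ S (u 0) (v 0) * Dmax := by
    rw [hB, abs_mul]
    exact mul_le_mul hSx hdu (abs_nonneg _) (le_trans (abs_nonneg _) hSx)
  have hD' : |D| ≤ S (v 0) (u 0) * Dmax := by
    rw [hD, abs_mul]
    exact mul_le_mul hSy hdv (abs_nonneg _) (le_trans (abs_nonneg _) hSy)
  have : η (u 0) (v 0) ≤ |A - C| := hηle
  linarith [hεgap, hAC, hB', hD', hηle, hgap.le, hgap.ge]
end

section
/- Let $\{f^\lambda_j\}$ satisfy (A1)-(A4) with constants as in the paper, and fix $\lambda_0\in\overline{U}$ and $\beta>0$. Then there exist $\xi>0$ and $c_1\in(0,1)$ such that for all $u,v\in\Omega$, all $x\in X$, and all $\lambda$ with $|\lambda-\lambda_0|<\xi$: $c_1\, d_{\lambda_0}(u,v)^{1+\beta/4} \le \big|\tfrac{d}{dx}f^\lambda_{u\wedge v}(x)\big| \le \tfrac{1}{c_1}\, d_{\lambda_0}(u,v)^{1-\beta/4}$, where $d_{\lambda_0}(u,v)=|f^{\lambda_0}_{u\wedge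 v}(X)|$. -/
open Set

/-- Composition `f^λ_{w₁} ∘ ⋯ ∘ f^λ_{wₙ}` of the IFS maps along the word `w`. -/
noncomputable def wordMap {m : ℕ} (f : ℝ → Fin m → ℝ → ℝ) (lam : ℝ)
    (w : List (Fin m)) : ℝ → ℝ :=
  w.foldr (fun j g => f lam j ∘ g) id

/-- Length of the longest common prefix of two distinct sequences. -/
noncomputable def sepLen {m : ℕ} (u v : ℕ → Fin m) : ℕ := sInf {k | u k ≠ v k}

/-- The longest common prefix `u ∧ v` of two sequences, as a finite word. -/
noncomputable def commonPrefix {m : ℕ} (u v : ℕ → Fin m) : List (Fin m) :=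
  List.ofFn fun i : Fin (sepLen u v) => u i

set_option maxHeartbeats 2000000 in
/-- For a parametrized IFS satisfying (A1)–(A4) (with `diam X = 1`), given
`λ₀ ∈ [a,b]` and `β > 0`, there are `ξ > 0` and `c₁ ∈ (0,1)` such that for all distinct
`u, v ∈ Ω`, all `x ∈ X` and all `λ` with `|λ - λ₀| < ξ`:
`c₁ d_{λ₀}(u,v)^{1+β/4} ≤ |(f^λ_{u∧v})'(x)| ≤ c₁⁻¹ d_{λ₀}(u,v)^{1-β/4}`,
where `d_{λ₀}(u,v) = |f^{λ₀}_{u∧v}(X)|`. -/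
theorem deriv_comparable_to_dlam
    {m : ℕ} (f : ℝ → Fin m → ℝ → ℝ)
    (x₀ x₁ a b δ γ₁ γ₂ M₁ M₂ C₁ C₂ C₃ C₄ C₅ : ℝ)
    (hX : x₀ < x₁) (hdiam : x₁ - x₀ = 1) (hab : a < b) (hδ : δ ∈ Set.Ioc (0:ℝ) 1)
    -- (A1)
    (hA1smooth : ∀ lam ∈ Set.Icc a b, ∀ j, ContDiff ℝ 2 (f lam j))
    (hmaps : ∀ lam ∈ Set.Icc a b, ∀ j,
      Set.MapsTo (f lam j) (Set.Icc x₀ x₁) (Set.Icc x₀ x₁))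
    (hM₁ : ∀ lam ∈ Set.Icc a b, ∀ j, ∀ x ∈ Set.Icc x₀ x₁,
      |deriv (deriv (f lam j)) x| ≤ M₁)
    (hA1hx : ∀ lam ∈ Set.Icc a b, ∀ j, ∀ x ∈ Set.Icc x₀ x₁, ∀ y ∈ Set.Icc x₀ x₁,
      |deriv (deriv (f lam j)) x - deriv (deriv (f lam j)) y| ≤ C₁ * |x - y| ^ δ)
    (hA1hl : ∀ j, ∀ x ∈ Set.Icc x₀ x₁, ∀ lam₁ ∈ Set.Icc a b, ∀ lam₂ ∈ Set.Icc a b,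
      |deriv (deriv (f lam₁ j)) x - deriv (deriv (f lam₂ j)) x| ≤ C₂ * |lam₁ - lam₂| ^ δ)
    -- (A2)
    (hA2d : ∀ j x, Differentiable ℝ fun t => f t j x)
    (hA2h : ∀ j, ∀ x ∈ Set.Icc x₀ x₁, ∀ lam₁ ∈ Set.Icc a b, ∀ lam₂ ∈ Set.Icc a b,
      |deriv (fun t => f t j x) lam₁ - deriv (fun t => f t j x) lam₂|
        ≤ C₃ * |lam₁ - lam₂| ^ δ)
    -- (A3)
    (hA3c : ∀ j, Continuous fun p : ℝ × ℝ => deriv (fun t => deriv (f t j) p.2) p.1)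
    (hA3b : ∀ j, ∀ lam ∈ Set.Icc a b, ∀ x ∈ Set.Icc x₀ x₁,
      |deriv (fun t => deriv (f t j) x) lam| ≤ M₂)
    (hA3hx : ∀ j, ∀ lam ∈ Set.Icc a b, ∀ x ∈ Set.Icc x₀ x₁, ∀ y ∈ Set.Icc x₀ x₁,
      |deriv (fun t => deriv (f t j) x) lam - deriv (fun t => deriv (f t j) y) lam|
        ≤ C₄ * |x - y| ^ δ)
    (hA3hl : ∀ j, ∀ lam₁ ∈ Set.Icc a b, ∀ lam₂ ∈ Set.Icc a b, ∀ x ∈ Set.Icc x₀ x₁,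
      |deriv (fun t => deriv (f t j) x) lam₁ - deriv (fun t => deriv (f t j) x) lam₂|
        ≤ C₅ * |lam₁ - lam₂| ^ δ)
    -- (A4)
    (hγ₁ : 0 < γ₁) (hγ₂ : γ₂ < 1)
    (hA4 : ∀ lam ∈ Set.Icc a b, ∀ j, ∀ x ∈ Set.Icc x₀ x₁,
      γ₁ ≤ |deriv (f lam j) x| ∧ |deriv (f lam j) x| ≤ γ₂) :
    ∀ β > (0:ℝ), ∀ lam₀ ∈ Set.Icc a b, ∃ ξ > (0:ℝ), ∃ c₁ ∈ Set.Ioo (0:ℝ) 1,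
      ∀ u v : ℕ → Fin m, u ≠ v → ∀ x ∈ Set.Icc x₀ x₁, ∀ lam ∈ Set.Icc a b,
        |lam - lam₀| < ξ →
        c₁ * Metric.diam (wordMap f lam₀ (commonPrefix u v) '' Set.Icc x₀ x₁) ^ (1 + β/4)
            ≤ |deriv (wordMap f lam (commonPrefix u v)) x|
          ∧ |deriv (wordMap f lam (commonPrefix u v)) x|
            ≤ c₁⁻¹ *
              Metric.diam (wordMap f lam₀ (commonPrefix u v) '' Set.Icc x₀ x₁) ^ (1 - β/4) := by
  
  intro β hβ lam₀ hlam₀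
  rcases Nat.eq_zero_or_pos m with hm | hm
  · refine ⟨1, one_pos, 1/2, by norm_num, fun u v _ x _ lam _ _ => ?_⟩
    exact absurd (u 0).isLt (by omega)
  have hδ0 : (0:ℝ) < δ := hδ.1
  have hXconv : Convex ℝ (Set.Icc x₀ x₁) := convex_Icc _ _
  have hx₀X : x₀ ∈ Set.Icc x₀ x₁ := Set.left_mem_Icc.2 hX.le
  have hx₁X : x₁ ∈ Set.Icc x₀ x₁ := Set.right_mem_Icc.2 hX.le
  have haI : a ∈ Set.Icc a b := Set.left_mem_Icc.2 hab.le
  have hbI : b ∈ Set.Icc a b := Set.right_mem_Icc.2 hab.le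
  set j₀ : Fin m := ⟨0, hm⟩ with hj₀
  have hγ₂pos : 0 < γ₂ :=
    lt_of_lt_of_le hγ₁ (le_trans (hA4 a haI j₀ x₀ hx₀X).1 (hA4 a haI j₀ x₀ hx₀X).2)
  have hγ₂1 : (0:ℝ) < 1 - γ₂ := by linarith
  have hM₁0 : 0 ≤ M₁ := le_trans (abs_nonneg _) (hM₁ a haI j₀ x₀ hx₀X)
  have hba : 0 < b - a := sub_pos.2 hab
  -- diameter of X is 1
  have hdiamX : ∀ p ∈ Set.Icc x₀ x₁, ∀ q ∈ Set.Icc x₀ x₁, |p - q| ≤ 1 := by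
    intro p hp q hq
    rw [abs_sub_le_iff]
    constructor <;> [skip; skip] <;>
      · obtain ⟨h1, h2⟩ := hp; obtain ⟨h3, h4⟩ := hq; linarith
  -- differentiability
  have hd1 : ∀ lam ∈ Set.Icc a b, ∀ j, Differentiable ℝ (f lam j) := fun lam hlam j =>
    (hA1smooth lam hlam j).differentiable (by norm_num)
  have hd2 : ∀ lam ∈ Set.Icc a b, ∀ j, Differentiable ℝ (deriv (f lam j)) := by
    intro lam hlam j
    have h2 := hA1smooth lam hlam j
    rw [show (2 : WithTop ℕ∞) = 1 + 1 from by norm_num] at h2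
    exact ((contDiff_succ_iff_deriv.mp h2).2.2).differentiable one_ne_zero
  -- Lipschitz bounds in x
  have hLip : ∀ lam ∈ Set.Icc a b, ∀ j, ∀ p ∈ Set.Icc x₀ x₁, ∀ q ∈ Set.Icc x₀ x₁,
      |f lam j p - f lam j q| ≤ γ₂ * |p - q| := by
    intro lam hlam j p hp q hq
    have := hXconv.norm_image_sub_le_of_norm_deriv_le
      (fun z _ => (hd1 lam hlam j).differentiableAt)
      (fun z hz => (hA4 lam hlam j z hz).2) hq hp
    simpa [Real.norm_eq_abs] using this
  have hLipD : ∀ lam ∈ Set.Icc a b, ∀ j, ∀ p ∈ Set.Icc x₀ x₁, ∀ q ∈ Set.Icc x₀ x₁,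
      |deriv (f lam j) p - deriv (f lam j) q| ≤ M₁ * |p - q| := by
    intro lam hlam j p hp q hq
    have := hXconv.norm_image_sub_le_of_norm_deriv_le
      (fun z _ => (hd2 lam hlam j).differentiableAt)
      (fun z hz => hM₁ lam hlam j z hz) hq hp
    simpa [Real.norm_eq_abs] using this
  -- the constant L bounding the λ-derivative of f
  obtain ⟨L, hLdef⟩ : ∃ e : ℝ, e = 1/(b-a) + C₃ * (b-a)^δ := ⟨_, rfl⟩
  have hC₃' : 0 ≤ C₃ * (b-a)^δ := by
    have h0 := hA2h j₀ x₀ hx₀X a haI b hbI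
    have h1 : |a - b| = b - a := by rw [abs_sub_comm, abs_of_pos hba]
    rw [h1] at h0
    exact le_trans (abs_nonneg _) h0
  have hC₃nn : 0 ≤ C₃ := by
    by_contra hneg
    push_neg at hneg
    have hp := Real.rpow_pos_of_pos hba δ
    nlinarith
  have hLpos : 0 < L := by
    have h : 0 < 1/(b-a) := by positivity
    rw [hLdef]; linarith
  have hgbound : ∀ j, ∀ x ∈ Set.Icc x₀ x₁, ∀ lam ∈ Set.Icc a b,
      |deriv (fun t => f t j x) lam| ≤ L := by
    intro j x hx lam hlam
    obtain ⟨c, hc, hceq⟩ := exists_deriv_eq_slope (fun t => f t j x) hab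
      ((hA2d j x).continuous.continuousOn) ((hA2d j x).differentiableOn)
    have hcI : c ∈ Set.Icc a b := Set.Ioo_subset_Icc_self hc
    have h1 : |deriv (fun t => f t j x) c| ≤ 1/(b-a) := by
      rw [hceq, abs_div, abs_of_pos hba]
      have h2 : |f b j x - f a j x| ≤ 1 :=
        hdiamX _ (hmaps b hbI j hx) _ (hmaps a haI j hx)
      rw [div_le_div_iff₀ hba hba]
      nlinarith
    have h3 := hA2h j x hx lam hlam c hcI
    have h4 : C₃ * |lam - c|^δ ≤ C₃ * (b-a)^δ := by
      apply mul_le_mul_of_nonneg_left _ hC₃nn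
      apply Real.rpow_le_rpow (abs_nonneg _) _ hδ0.le
      rw [abs_sub_le_iff]
      obtain ⟨u1, u2⟩ := hlam; obtain ⟨u3, u4⟩ := hcI
      constructor <;> linarith
    calc |deriv (fun t => f t j x) lam|
        ≤ |deriv (fun t => f t j x) c| + |deriv (fun t => f t j x) lam - deriv (fun t => f t j x) c| := by
          have := abs_sub_abs_le_abs_sub (deriv (fun t => f t j x) lam) (deriv (fun t => f t j x) c)
          linarith [abs_nonneg (deriv (fun t => f t j x) lam - deriv (fun t => f t j x) c)]
      _ ≤ 1/(b-a) + C₃ * (b-a)^δ := add_le_add h1 (le_trans h3 h4)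
      _ = L := hLdef.symm
  have hflip : ∀ j, ∀ x ∈ Set.Icc x₀ x₁, ∀ lam ∈ Set.Icc a b, ∀ mu ∈ Set.Icc a b,
      |f lam j x - f mu j x| ≤ L * |lam - mu| := by
    intro j x hx lam hlam mu hmu
    have := (convex_Icc a b).norm_image_sub_le_of_norm_deriv_le
      (fun z _ => (hA2d j x).differentiableAt)
      (fun z hz => hgbound j x hx z hz) hmu hlam
    simpa [Real.norm_eq_abs] using this
  -- choice of constants
  obtain ⟨ε₀, hε₀def⟩ : ∃ e : ℝ, e = (β/4) * (-Real.log γ₂) := ⟨_, rfl⟩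
  have hε₀ : 0 < ε₀ := by
    rw [hε₀def]
    exact mul_pos (by linarith) (neg_pos.2 (Real.log_neg hγ₂pos hγ₂))
  obtain ⟨K, hKdef⟩ : ∃ e : ℝ, e = 2*M₁ + 2*L + M₁*L/(1-γ₂) := ⟨_, rfl⟩
  have hK : 0 < K := by
    have h : 0 ≤ M₁*L/(1-γ₂) := div_nonneg (mul_nonneg hM₁0 hLpos.le) hγ₂1.le
    rw [hKdef]; linarith
  obtain ⟨ξ, hξdef⟩ : ∃ e : ℝ, e = min (1/4) ((γ₁*ε₀/K)^2) := ⟨_, rfl⟩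
  have hξpos : 0 < ξ := by
    rw [hξdef]
    exact lt_min (by norm_num) (pow_pos (div_pos (mul_pos hγ₁ hε₀) hK) 2)
  have hξ14 : ξ ≤ 1/4 := by rw [hξdef]; exact min_le_left _ _
  have hsq : Real.sqrt ξ ≤ γ₁*ε₀/K := by
    have h1 : Real.sqrt ξ ≤ Real.sqrt ((γ₁*ε₀/K)^2) := by
      apply Real.sqrt_le_sqrt
      rw [hξdef]; exact min_le_right _ _
    rwa [Real.sqrt_sq (div_pos (mul_pos hγ₁ hε₀) hK).le] at h1
  have hsqpos : 0 < Real.sqrt ξ := Real.sqrt_pos.2 hξpos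
  have hsqhalf : Real.sqrt ξ ≤ 1/2 := by
    nlinarith [Real.sq_sqrt hξpos.le, hsqpos]
  have hξsq : ξ ≤ Real.sqrt ξ := by
    nlinarith [Real.sq_sqrt hξpos.le, hsqpos]
  obtain ⟨D, hDdef⟩ : ∃ e : ℝ, e = L*ξ/(1-γ₂) := ⟨_, rfl⟩
  have hD0 : 0 ≤ D := by
    rw [hDdef]; exact div_nonneg (mul_nonneg hLpos.le hξpos.le) hγ₂1.le
  obtain ⟨Δ, hΔdef⟩ : ∃ e : ℝ, e = (2*M₁+2*L) * Real.sqrt ξ := ⟨_, rfl⟩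
  have hΔ0 : 0 ≤ Δ := by
    rw [hΔdef]; exact mul_nonneg (by linarith) (Real.sqrt_nonneg _)
  have hkey : (Δ + M₁*D)/γ₁ ≤ ε₀ := by
    have h1 : M₁*D ≤ (M₁*L/(1-γ₂)) * Real.sqrt ξ := by
      rw [hDdef]
      calc M₁*(L*ξ/(1-γ₂)) = (M₁*L/(1-γ₂)) * ξ := by ring
        _ ≤ (M₁*L/(1-γ₂)) * Real.sqrt ξ :=
            mul_le_mul_of_nonneg_left hξsq (div_nonneg (mul_nonneg hM₁0 hLpos.le) hγ₂1.le)
    have h2 : Δ + M₁*D ≤ K * Real.sqrt ξ := by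
      rw [hΔdef, hKdef]; nlinarith [Real.sqrt_nonneg ξ]
    rw [div_le_iff₀ hγ₁]
    calc Δ + M₁*D ≤ K * Real.sqrt ξ := h2
      _ ≤ K * (γ₁*ε₀/K) := mul_le_mul_of_nonneg_left hsq hK.le
      _ = ε₀ * γ₁ := by rw [mul_comm K _, div_mul_cancel₀ _ (ne_of_gt hK)]; ring
  -- Δ-bound : closeness of x-derivatives for nearby parameters
  have hDelta : ∀ j, ∀ x ∈ Set.Icc x₀ x₁, ∀ lam ∈ Set.Icc a b, ∀ mu ∈ Set.Icc a b,
      |lam - mu| ≤ ξ → |deriv (f lam j) x - deriv (f mu j) x| ≤ Δ := by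
    intro j x hx lam hlam mu hmu hnear
    have hx0 := hx.1
    have hx1 := hx.2
    -- choose the base point s of an interval [s, s+(Real.sqrt ξ)] ⊆ X containing x
    obtain ⟨s, hs0, hs1, hxs, hxs'⟩ :
        ∃ s, x₀ ≤ s ∧ s + (Real.sqrt ξ) ≤ x₁ ∧ s ≤ x ∧ x ≤ s + (Real.sqrt ξ) := by
      rcases le_or_gt (x + (Real.sqrt ξ)) x₁ with hc | hc
      · exact ⟨x, hx0, hc, le_refl x, by linarith⟩
      · exact ⟨x - (Real.sqrt ξ), by nlinarith, by linarith, by linarith, by linarith⟩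
    have hsh : s < s + (Real.sqrt ξ) := by linarith
    have hsX : ∀ z ∈ Set.Icc s (s+(Real.sqrt ξ)), z ∈ Set.Icc x₀ x₁ := by
      intro z hz; exact ⟨by linarith [hz.1], by linarith [hz.2]⟩
    obtain ⟨c, hc, hceq⟩ := exists_deriv_eq_slope (f lam j) hsh
      ((hd1 lam hlam j).continuous.continuousOn)
      ((hd1 lam hlam j).differentiableOn)
    obtain ⟨c', hc', hceq'⟩ := exists_deriv_eq_slope (f mu j) hsh
      ((hd1 mu hmu j).continuous.continuousOn)
      ((hd1 mu hmu j).differentiableOn)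
    have hcX : c ∈ Set.Icc x₀ x₁ := hsX c (Set.Ioo_subset_Icc_self hc)
    have hcX' : c' ∈ Set.Icc x₀ x₁ := hsX c' (Set.Ioo_subset_Icc_self hc')
    have hshX : s + (Real.sqrt ξ) ∈ Set.Icc x₀ x₁ := ⟨by linarith, hs1⟩
    have hsXX : s ∈ Set.Icc x₀ x₁ := ⟨hs0, by linarith⟩
    have hxc : |x - c| ≤ (Real.sqrt ξ) := by
      obtain ⟨e1, e2⟩ := hc
      rw [abs_sub_le_iff]; constructor <;> linarith
    have hxc' : |c' - x| ≤ (Real.sqrt ξ) := by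
      obtain ⟨e1, e2⟩ := hc'
      rw [abs_sub_le_iff]; constructor <;> linarith
    have hmid : |deriv (f lam j) c - deriv (f mu j) c'| ≤ 2*L*(Real.sqrt ξ) := by
      rw [hceq, hceq']
      have hsimp : (s + (Real.sqrt ξ)) - s = (Real.sqrt ξ) := by ring
      rw [hsimp, div_sub_div_same, abs_div, abs_of_pos hsqpos]
      rw [div_le_iff₀ hsqpos]
      have e1 : |f lam j (s+(Real.sqrt ξ)) - f mu j (s+(Real.sqrt ξ))| ≤ L * |lam - mu| :=
        hflip j (s+(Real.sqrt ξ)) hshX lam hlam mu hmu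
      have e2 : |f lam j s - f mu j s| ≤ L * |lam - mu| :=
        hflip j s hsXX lam hlam mu hmu
      have e3 : |f lam j (s + (Real.sqrt ξ)) - f lam j s - (f mu j (s+(Real.sqrt ξ)) - f mu j s)|
          ≤ |f lam j (s+(Real.sqrt ξ)) - f mu j (s+(Real.sqrt ξ))| + |f lam j s - f mu j s| := by
        have := abs_sub (f lam j (s+(Real.sqrt ξ)) - f mu j (s+(Real.sqrt ξ))) (f lam j s - f mu j s)
        calc |f lam j (s + (Real.sqrt ξ)) - f lam j s - (f mu j (s+(Real.sqrt ξ)) - f mu j s)|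
            = |(f lam j (s+(Real.sqrt ξ)) - f mu j (s+(Real.sqrt ξ))) - (f lam j s - f mu j s)| := by ring_nf
          _ ≤ _ := abs_sub _ _
      have e4 : L * |lam - mu| ≤ L * ξ := mul_le_mul_of_nonneg_left hnear hLpos.le
      have e5 : ξ ≤ (Real.sqrt ξ) * (Real.sqrt ξ) := by nlinarith [Real.sq_sqrt hξpos.le]
      calc |f lam j (s + (Real.sqrt ξ)) - f lam j s - (f mu j (s+(Real.sqrt ξ)) - f mu j s)|
          ≤ L*ξ + L*ξ := by linarith
        _ ≤ 2*L*(Real.sqrt ξ)*(Real.sqrt ξ) := by nlinarith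
    calc |deriv (f lam j) x - deriv (f mu j) x|
        ≤ |deriv (f lam j) x - deriv (f lam j) c| + |deriv (f lam j) c - deriv (f mu j) c'|
          + |deriv (f mu j) c' - deriv (f mu j) x| := by
          have t1 := abs_sub_le (deriv (f lam j) x) (deriv (f lam j) c) (deriv (f mu j) x)
          have t2 := abs_sub_le (deriv (f lam j) c) (deriv (f mu j) c') (deriv (f mu j) x)
          linarith
      _ ≤ M₁ * (Real.sqrt ξ) + 2*L*(Real.sqrt ξ) + M₁ * (Real.sqrt ξ) := by
          have a1 := hLipD lam hlam j x hx c hcX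
          have a2 := hLipD mu hmu j c' hcX' x hx
          have a3 : M₁ * |x - c| ≤ M₁ * Real.sqrt ξ := mul_le_mul_of_nonneg_left hxc hM₁0
          have a4 : M₁ * |c' - x| ≤ M₁ * Real.sqrt ξ := mul_le_mul_of_nonneg_left hxc' hM₁0
          linarith [hmid]
      _ = Δ := by rw [hΔdef]; ring
  -- word map basics
  have hWmaps : ∀ lam ∈ Set.Icc a b, ∀ w : List (Fin m),
      Set.MapsTo (wordMap f lam w) (Set.Icc x₀ x₁) (Set.Icc x₀ x₁) := by
    intro lam hlam w
    induction w with
    | nil => exact fun z hz => hz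
    | cons j w ih => exact (hmaps lam hlam j).comp ih
  have hWdiff : ∀ lam ∈ Set.Icc a b, ∀ w : List (Fin m),
      Differentiable ℝ (wordMap f lam w) := by
    intro lam hlam w
    induction w with
    | nil => exact differentiable_id
    | cons j w ih => exact (hd1 lam hlam j).comp ih
  have hWderiv : ∀ lam ∈ Set.Icc a b, ∀ (j : Fin m) (w : List (Fin m)) (x : ℝ),
      deriv (wordMap f lam (j :: w)) x
        = deriv (f lam j) (wordMap f lam w x) * deriv (wordMap f lam w) x := by
    intro lam hlam j w x
    exact deriv_comp x ((hd1 lam hlam j).differentiableAt) ((hWdiff lam hlam w).differentiableAt)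
  have hWbound : ∀ lam ∈ Set.Icc a b, ∀ w : List (Fin m), ∀ x ∈ Set.Icc x₀ x₁,
      γ₁ ^ w.length ≤ |deriv (wordMap f lam w) x| ∧
        |deriv (wordMap f lam w) x| ≤ γ₂ ^ w.length := by
    intro lam hlam w
    induction w with
    | nil =>
      intro x hx
      simp [wordMap]
    | cons j w ih =>
      intro x hx
      rw [hWderiv lam hlam j w x, abs_mul]
      have h4 := hA4 lam hlam j _ (hWmaps lam hlam w hx)
      obtain ⟨i1, i2⟩ := ih x hx
      constructor
      · rw [List.length_cons, pow_succ]
        calc γ₁ ^ w.length * γ₁ ≤ |deriv (wordMap f lam w) x| * |deriv (f lam j) (wordMap f lam w x)| := by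
              apply mul_le_mul i1 h4.1 hγ₁.le (abs_nonneg _)
          _ = _ := mul_comm _ _
      · rw [List.length_cons, pow_succ]
        calc |deriv (f lam j) (wordMap f lam w x)| * |deriv (wordMap f lam w) x|
            ≤ γ₂ * γ₂ ^ w.length := by
              apply mul_le_mul h4.2 i2 (abs_nonneg _) hγ₂pos.le
          _ = γ₂ ^ w.length * γ₂ := mul_comm _ _
  -- orbit drift
  have hdrift : ∀ w : List (Fin m), ∀ lam ∈ Set.Icc a b, ∀ mu ∈ Set.Icc a b,
      |lam - mu| ≤ ξ → ∀ x ∈ Set.Icc x₀ x₁, ∀ y ∈ Set.Icc x₀ x₁,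
      |wordMap f lam w x - wordMap f mu w y| ≤ γ₂ ^ w.length + D := by
    intro w
    induction w with
    | nil =>
      intro lam hlam mu hmu hnear x hx y hy
      have := hdiamX x hx y hy
      simp only [wordMap, List.foldr_nil, List.length_nil, pow_zero, id_eq]
      linarith
    | cons j w ih =>
      intro lam hlam mu hmu hnear x hx y hy
      have hp : wordMap f lam w x ∈ Set.Icc x₀ x₁ := hWmaps lam hlam w hx
      have hq : wordMap f mu w y ∈ Set.Icc x₀ x₁ := hWmaps mu hmu w hy
      have e0 : wordMap f lam (j :: w) x = f lam j (wordMap f lam w x) := rfl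
      have e0' : wordMap f mu (j :: w) y = f mu j (wordMap f mu w y) := rfl
      rw [e0, e0', List.length_cons]
      have e1 : |f lam j (wordMap f lam w x) - f mu j (wordMap f mu w y)|
          ≤ |f lam j (wordMap f lam w x) - f lam j (wordMap f mu w y)|
            + |f lam j (wordMap f mu w y) - f mu j (wordMap f mu w y)| := by
        have := abs_add_le (f lam j (wordMap f lam w x) - f lam j (wordMap f mu w y))
          (f lam j (wordMap f mu w y) - f mu j (wordMap f mu w y))
        calc |f lam j (wordMap f lam w x) - f mu j (wordMap f mu w y)|
            = |(f lam j (wordMap f lam w x) - f lam j (wordMap f mu w y))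
              + (f lam j (wordMap f mu w y) - f mu j (wordMap f mu w y))| := by ring_nf
          _ ≤ _ := this
      have e2 := hLip lam hlam j _ hp _ hq
      have e3 := hflip j _ hq lam hlam mu hmu
      have e4 := ih lam hlam mu hmu hnear x hx y hy
      have e5 : L * |lam - mu| ≤ L * ξ := mul_le_mul_of_nonneg_left hnear hLpos.le
      have e6 : γ₂ * D + L * ξ = D := by
        rw [hDdef]; field_simp; ring
      calc |f lam j (wordMap f lam w x) - f mu j (wordMap f mu w y)|
          ≤ γ₂ * |wordMap f lam w x - wordMap f mu w y| + L * ξ := by linarith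
        _ ≤ γ₂ * (γ₂ ^ w.length + D) + L * ξ :=
            add_le_add_left (mul_le_mul_of_nonneg_left e4 hγ₂pos.le) _
        _ = γ₂ ^ (w.length + 1) + (γ₂ * D + L * ξ) := by ring
        _ = γ₂ ^ (w.length + 1) + D := by rw [e6]
  -- key distortion estimate
  obtain ⟨cc, hccdef⟩ : ∃ e : ℝ, e = M₁/γ₁ := ⟨_, rfl⟩
  have hcc0 : 0 ≤ cc := by rw [hccdef]; exact div_nonneg hM₁0 hγ₁.le
  obtain ⟨ρ, hρdef⟩ : ∃ e : ℝ, e = Real.exp ((Δ + M₁*D)/γ₁) := ⟨_, rfl⟩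
  have hρ1 : 1 ≤ ρ := by
    rw [hρdef]
    exact Real.one_le_exp (div_nonneg (add_nonneg hΔ0 (mul_nonneg hM₁0 hD0)) hγ₁.le)
  have hρpos : 0 < ρ := lt_of_lt_of_le one_pos hρ1
  obtain ⟨E, hEdef⟩ : ∃ e : ℝ, e = Real.exp (cc/(1-γ₂)) := ⟨_, rfl⟩
  have hE1 : 1 ≤ E := by
    rw [hEdef]; exact Real.one_le_exp (div_nonneg hcc0 hγ₂1.le)
  have hEpos : 0 < E := lt_of_lt_of_le one_pos hE1
  have hKEY : ∀ w : List (Fin m), ∀ lam ∈ Set.Icc a b, ∀ mu ∈ Set.Icc a b,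
      |lam - mu| ≤ ξ → ∀ x ∈ Set.Icc x₀ x₁, ∀ y ∈ Set.Icc x₀ x₁,
      |deriv (wordMap f lam w) x| ≤ |deriv (wordMap f mu w) y| *
        (Real.exp (cc * ∑ k ∈ Finset.range w.length, γ₂ ^ k) * ρ ^ w.length) := by
    intro w
    induction w with
    | nil =>
      intro lam hlam mu hmu hnear x hx y hy
      simp [wordMap]
    | cons j w ih =>
      intro lam hlam mu hmu hnear x hx y hy
      have hp : wordMap f lam w x ∈ Set.Icc x₀ x₁ := hWmaps lam hlam w hx
      have hq : wordMap f mu w y ∈ Set.Icc x₀ x₁ := hWmaps mu hmu w hy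
      have hB : γ₁ ≤ |deriv (f mu j) (wordMap f mu w y)| := (hA4 mu hmu j _ hq).1
      have hfact : |deriv (f lam j) (wordMap f lam w x)|
          ≤ |deriv (f mu j) (wordMap f mu w y)| * (Real.exp (cc * γ₂ ^ w.length) * ρ) := by
        have t1 : |deriv (f lam j) (wordMap f lam w x) - deriv (f mu j) (wordMap f mu w y)|
            ≤ Δ + M₁ * (γ₂ ^ w.length + D) := by
          calc |deriv (f lam j) (wordMap f lam w x) - deriv (f mu j) (wordMap f mu w y)|
              ≤ |deriv (f lam j) (wordMap f lam w x) - deriv (f mu j) (wordMap f lam w x)|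
                + |deriv (f mu j) (wordMap f lam w x) - deriv (f mu j) (wordMap f mu w y)| := by
                have := abs_add_le (deriv (f lam j) (wordMap f lam w x) - deriv (f mu j) (wordMap f lam w x))
                  (deriv (f mu j) (wordMap f lam w x) - deriv (f mu j) (wordMap f mu w y))
                calc |deriv (f lam j) (wordMap f lam w x) - deriv (f mu j) (wordMap f mu w y)|
                    = |(deriv (f lam j) (wordMap f lam w x) - deriv (f mu j) (wordMap f lam w x))
                      + (deriv (f mu j) (wordMap f lam w x) - deriv (f mu j) (wordMap f mu w y))| := by
                      ring_nf
                  _ ≤ _ := this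
            _ ≤ Δ + M₁ * (γ₂ ^ w.length + D) := by
                have u1 := hDelta j _ hp lam hlam mu hmu hnear
                have u2 := hLipD mu hmu j _ hp _ hq
                have u3 := hdrift w lam hlam mu hmu hnear x hx y hy
                have u4 : M₁ * |wordMap f lam w x - wordMap f mu w y|
                    ≤ M₁ * (γ₂ ^ w.length + D) := mul_le_mul_of_nonneg_left u3 hM₁0
                linarith
        have t2 : |deriv (f lam j) (wordMap f lam w x)|
            ≤ |deriv (f mu j) (wordMap f mu w y)| + (Δ + M₁ * (γ₂ ^ w.length + D)) := by
          have := abs_sub_abs_le_abs_sub (deriv (f lam j) (wordMap f lam w x))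
            (deriv (f mu j) (wordMap f mu w y))
          linarith
        have hpw : (0:ℝ) ≤ γ₂ ^ w.length := pow_nonneg hγ₂pos.le _
        have hnn : 0 ≤ Δ + M₁ * (γ₂ ^ w.length + D) :=
          add_nonneg hΔ0 (mul_nonneg hM₁0 (add_nonneg hpw hD0))
        have t3 : |deriv (f mu j) (wordMap f mu w y)| + (Δ + M₁ * (γ₂ ^ w.length + D))
            ≤ |deriv (f mu j) (wordMap f mu w y)|
              * (1 + (Δ + M₁ * (γ₂ ^ w.length + D))/γ₁) := by
          have hq : 0 ≤ (Δ + M₁ * (γ₂ ^ w.length + D))/γ₁ := div_nonneg hnn hγ₁.le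
          have h5 : Δ + M₁ * (γ₂ ^ w.length + D)
              = γ₁ * ((Δ + M₁ * (γ₂ ^ w.length + D))/γ₁) := by field_simp
          nlinarith [mul_le_mul_of_nonneg_right hB hq]
        have t4 : 1 + (Δ + M₁ * (γ₂ ^ w.length + D))/γ₁
            ≤ Real.exp (cc * γ₂ ^ w.length) * ρ := by
          have e1 : (Δ + M₁ * (γ₂ ^ w.length + D))/γ₁
              = cc * γ₂ ^ w.length + (Δ + M₁*D)/γ₁ := by
            rw [hccdef]; field_simp; ring
          rw [hρdef, ← Real.exp_add, e1]
          linarith [Real.add_one_le_exp (cc * γ₂ ^ w.length + (Δ + M₁*D)/γ₁)]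
        calc |deriv (f lam j) (wordMap f lam w x)|
            ≤ |deriv (f mu j) (wordMap f mu w y)|
              * (1 + (Δ + M₁ * (γ₂ ^ w.length + D))/γ₁) := le_trans t2 t3
          _ ≤ |deriv (f mu j) (wordMap f mu w y)| * (Real.exp (cc * γ₂ ^ w.length) * ρ) :=
              mul_le_mul_of_nonneg_left t4 (abs_nonneg _)
      rw [hWderiv lam hlam j w x, hWderiv mu hmu j w y, abs_mul, abs_mul]
      have ihx := ih lam hlam mu hmu hnear x hx y hy
      have hnn1 : (0:ℝ) ≤ |deriv (wordMap f lam w) x| := abs_nonneg _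
      have hnn2 : (0:ℝ) ≤ |deriv (f mu j) (wordMap f mu w y)| * (Real.exp (cc * γ₂ ^ w.length) * ρ) :=
        mul_nonneg (abs_nonneg _) (mul_nonneg (Real.exp_pos _).le hρpos.le)
      calc |deriv (f lam j) (wordMap f lam w x)| * |deriv (wordMap f lam w) x|
          ≤ (|deriv (f mu j) (wordMap f mu w y)| * (Real.exp (cc * γ₂ ^ w.length) * ρ))
            * (|deriv (wordMap f mu w) y| *
              (Real.exp (cc * ∑ k ∈ Finset.range w.length, γ₂ ^ k) * ρ ^ w.length)) :=
            mul_le_mul hfact ihx hnn1 hnn2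
        _ = |deriv (f mu j) (wordMap f mu w y)| * |deriv (wordMap f mu w) y| *
            (Real.exp (cc * ∑ k ∈ Finset.range (w.length + 1), γ₂ ^ k) * ρ ^ (w.length + 1)) := by
            rw [Finset.sum_range_succ, mul_add, Real.exp_add, pow_succ]
            ring
        _ = _ := by rw [List.length_cons]
  -- geometric sum bound
  have hgeo : ∀ n : ℕ, (∑ k ∈ Finset.range n, γ₂ ^ k) ≤ 1/(1-γ₂) := by
    intro n
    rw [geom_sum_eq (by linarith : γ₂ ≠ 1)]
    have h1 : (γ₂ ^ n - 1) / (γ₂ - 1) = (1 - γ₂ ^ n)/(1 - γ₂) := by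
      rw [div_eq_div_iff (ne_of_lt (by linarith : γ₂ - 1 < 0)) (ne_of_gt hγ₂1)]; ring
    rw [h1, div_le_div_iff₀ hγ₂1 hγ₂1]
    nlinarith [pow_nonneg hγ₂pos.le n]
  have hKEY' : ∀ w : List (Fin m), ∀ lam ∈ Set.Icc a b, ∀ mu ∈ Set.Icc a b,
      |lam - mu| ≤ ξ → ∀ x ∈ Set.Icc x₀ x₁, ∀ y ∈ Set.Icc x₀ x₁,
      |deriv (wordMap f lam w) x| ≤ |deriv (wordMap f mu w) y| * (E * ρ ^ w.length) := by
    intro w lam hlam mu hmu hnear x hx y hy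
    have h1 := hKEY w lam hlam mu hmu hnear x hx y hy
    have h2 : Real.exp (cc * ∑ k ∈ Finset.range w.length, γ₂ ^ k) ≤ E := by
      rw [hEdef]
      apply Real.exp_le_exp.2
      calc cc * ∑ k ∈ Finset.range w.length, γ₂ ^ k ≤ cc * (1/(1-γ₂)) :=
            mul_le_mul_of_nonneg_left (hgeo w.length) hcc0
        _ = cc/(1-γ₂) := by ring
    calc |deriv (wordMap f lam w) x|
        ≤ |deriv (wordMap f mu w) y| *
          (Real.exp (cc * ∑ k ∈ Finset.range w.length, γ₂ ^ k) * ρ ^ w.length) := h1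
      _ ≤ |deriv (wordMap f mu w) y| * (E * ρ ^ w.length) := by
          apply mul_le_mul_of_nonneg_left _ (abs_nonneg _)
          exact mul_le_mul_of_nonneg_right h2 (pow_nonneg hρpos.le _)
  -- ρ^n vs γ₂^n rpow bound
  have hρn : ∀ n : ℕ, ρ ^ n ≤ (γ₂ ^ n) ^ (-(β/4) : ℝ) := by
    intro n
    rw [hρdef, ← Real.exp_nat_mul]
    rw [Real.rpow_def_of_pos (pow_pos hγ₂pos n), Real.log_pow]
    apply Real.exp_le_exp.2
    have h1 : (n:ℝ) * ((Δ + M₁*D)/γ₁) ≤ (n:ℝ) * ε₀ :=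
      mul_le_mul_of_nonneg_left hkey (Nat.cast_nonneg n)
    calc (n:ℝ) * ((Δ + M₁*D)/γ₁) ≤ (n:ℝ) * ε₀ := h1
      _ = (n:ℝ) * Real.log γ₂ * (-(β/4)) := by rw [hε₀def]; ring
  -- final constant
  refine ⟨ξ, hξpos, min E⁻¹ (1/2), ⟨lt_min (inv_pos.2 hEpos) (by norm_num),
    lt_of_le_of_lt (min_le_right _ _) (by norm_num)⟩, ?_⟩
  intro u v huv x hx lam hlam hnear
  set w : List (Fin m) := commonPrefix u v with hwdef
  set n : ℕ := w.length with hndef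
  set F : ℝ → ℝ := wordMap f lam₀ w with hFdef
  set d : ℝ := Metric.diam (F '' Set.Icc x₀ x₁) with hddef
  have hnear' : |lam - lam₀| ≤ ξ := hnear.le
  have hnear'' : |lam₀ - lam| ≤ ξ := by rwa [abs_sub_comm]
  have hFc : Continuous F := (hWdiff lam₀ hlam₀ w).continuous
  have hFb : Bornology.IsBounded (F '' Set.Icc x₀ x₁) :=
    (isCompact_Icc.image hFc).isBounded
  -- d ≤ γ₂ ^ n
  have hd_le : d ≤ γ₂ ^ n := by
    apply Metric.diam_le_of_forall_dist_le (pow_nonneg hγ₂pos.le n)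
    rintro _ ⟨p, hp, rfl⟩ _ ⟨q, hq, rfl⟩
    rw [Real.dist_eq]
    have := hXconv.norm_image_sub_le_of_norm_deriv_le
      (fun z _ => (hWdiff lam₀ hlam₀ w).differentiableAt)
      (fun z hz => (hWbound lam₀ hlam₀ w z hz).2) hq hp
    simp only [Real.norm_eq_abs] at this
    calc |F p - F q| ≤ γ₂ ^ n * |p - q| := this
      _ ≤ γ₂ ^ n * 1 := mul_le_mul_of_nonneg_left (hdiamX p hp q hq) (pow_nonneg hγ₂pos.le n)
      _ = γ₂ ^ n := mul_one _
  -- the MVT point y with |F'(y)| ≤ d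
  obtain ⟨y, hyo, hyeq⟩ := exists_deriv_eq_slope F hX (hFc.continuousOn)
    ((hWdiff lam₀ hlam₀ w).differentiableOn)
  have hyX : y ∈ Set.Icc x₀ x₁ := Set.Ioo_subset_Icc_self hyo
  have hy_le : |deriv F y| ≤ d := by
    rw [hyeq, hdiam, div_one]
    have : dist (F x₁) (F x₀) ≤ d :=
      Metric.dist_le_diam_of_mem hFb ⟨x₁, hx₁X, rfl⟩ ⟨x₀, hx₀X, rfl⟩
    rwa [Real.dist_eq] at this
  have hd_pos : 0 < d :=
    lt_of_lt_of_le (lt_of_lt_of_le (pow_pos hγ₁ n) (hWbound lam₀ hlam₀ w y hyX).1) hy_le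
  -- d ≤ E ρ^n |G'(x)|
  have hd_ge : d ≤ E * ρ ^ n * |deriv (wordMap f lam w) x| := by
    apply Metric.diam_le_of_forall_dist_le
      (mul_nonneg (mul_nonneg hEpos.le (pow_pos hρpos n).le) (abs_nonneg _))
    rintro _ ⟨p, hp, rfl⟩ _ ⟨q, hq, rfl⟩
    have hgen : ∀ p' q' : ℝ, p' ∈ Set.Icc x₀ x₁ → q' ∈ Set.Icc x₀ x₁ → p' < q' →
        dist (F p') (F q') ≤ E * ρ ^ n * |deriv (wordMap f lam w) x| := by
      intro p' q' hp' hq' hpq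
      obtain ⟨c, hco, hceq⟩ := exists_deriv_eq_slope F hpq
        (hFc.continuousOn) ((hWdiff lam₀ hlam₀ w).differentiableOn)
      have hcX : c ∈ Set.Icc x₀ x₁ :=
        ⟨le_trans hp'.1 (le_of_lt hco.1), le_trans (le_of_lt hco.2) hq'.2⟩
      have h1 : |deriv F c| ≤ |deriv (wordMap f lam w) x| * (E * ρ ^ n) :=
        hKEY' w lam₀ hlam₀ lam hlam hnear'' c hcX x hx
      have h2 : dist (F p') (F q') = |deriv F c| * (q' - p') := by
        rw [Real.dist_eq, abs_sub_comm]
        have hne : q' - p' ≠ 0 := ne_of_gt (by linarith)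
        have hh : F q' - F p' = deriv F c * (q' - p') := by
          rw [hceq, div_mul_cancel₀ _ hne]
        rw [hh, abs_mul, abs_of_pos (by linarith : (0:ℝ) < q' - p')]
      have h3 : q' - p' ≤ 1 := by
        obtain ⟨a1, a2⟩ := hp'; obtain ⟨a3, a4⟩ := hq'; linarith
      calc dist (F p') (F q') = |deriv F c| * (q' - p') := h2
        _ ≤ |deriv F c| * 1 := mul_le_mul_of_nonneg_left h3 (abs_nonneg _)
        _ = |deriv F c| := mul_one _
        _ ≤ |deriv (wordMap f lam w) x| * (E * ρ ^ n) := h1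
        _ = E * ρ ^ n * |deriv (wordMap f lam w) x| := by ring
    rcases lt_trichotomy p q with hpq | hpq | hpq
    · exact hgen p q hp hq hpq
    · subst hpq
      simp only [dist_self]
      exact mul_nonneg (mul_nonneg hEpos.le (pow_pos hρpos n).le) (abs_nonneg _)
    · rw [dist_comm]; exact hgen q p hq hp hpq
  -- upper bound for |G'(x)|
  have hup : |deriv (wordMap f lam w) x| ≤ d * (E * ρ ^ n) := by
    calc |deriv (wordMap f lam w) x| ≤ |deriv F y| * (E * ρ ^ n) :=
          hKEY' w lam hlam lam₀ hlam₀ hnear' x hx y hyX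
      _ ≤ d * (E * ρ ^ n) := by
          exact mul_le_mul_of_nonneg_right hy_le (mul_nonneg hEpos.le (pow_pos hρpos n).le)
  -- rpow arithmetic
  have hρE : 0 < ρ ^ n := pow_pos hρpos n
  have hrne : ρ ^ n ≤ (γ₂ ^ n) ^ (-(β/4) : ℝ) := hρn n
  have hda : d ^ (-(β/4) : ℝ) ≥ (γ₂ ^ n) ^ (-(β/4) : ℝ) :=
    Real.rpow_le_rpow_of_nonpos hd_pos hd_le (by linarith)
  constructor
  · -- lower bound
    have h1 : d ^ ((β/4) : ℝ) ≤ (γ₂ ^ n) ^ ((β/4) : ℝ) :=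
      Real.rpow_le_rpow hd_pos.le hd_le (by linarith)
    have h2 : (γ₂ ^ n : ℝ) ^ ((β/4) : ℝ) * (γ₂ ^ n : ℝ) ^ (-(β/4) : ℝ) = 1 := by
      rw [← Real.rpow_add (pow_pos hγ₂pos n)]; simp
    have h3 : d ^ ((β/4) : ℝ) * (ρ ^ n) ≤ 1 := by
      calc d ^ ((β/4) : ℝ) * (ρ ^ n) ≤ (γ₂ ^ n : ℝ) ^ ((β/4) : ℝ) * (γ₂ ^ n : ℝ) ^ (-(β/4) : ℝ) := by
            apply mul_le_mul h1 hrne hρE.le (Real.rpow_nonneg (pow_nonneg hγ₂pos.le n) _)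
        _ = 1 := h2
    have h4 : d ^ ((1:ℝ) + β/4) = d * d ^ ((β/4) : ℝ) := by
      rw [Real.rpow_add hd_pos, Real.rpow_one]
    have h5 : min E⁻¹ (1/2) ≤ E⁻¹ := min_le_left _ _
    -- c₁ d^{1+β/4} ≤ E⁻¹ d d^{β/4} ≤ E⁻¹ d (ρ^n)⁻¹ ... use hd_ge
    have h6 : d ≤ E * ρ ^ n * |deriv (wordMap f lam w) x| := hd_ge
    have h7 : min E⁻¹ (1/2) * d ^ ((1:ℝ) + β/4) ≤ E⁻¹ * (d * d ^ ((β/4):ℝ)) := by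
      rw [h4]
      exact mul_le_mul_of_nonneg_right h5
        (mul_nonneg hd_pos.le (Real.rpow_nonneg hd_pos.le _))
    calc min E⁻¹ (1/2) * d ^ ((1:ℝ) + β/4) ≤ E⁻¹ * (d * d ^ ((β/4):ℝ)) := h7
      _ ≤ E⁻¹ * ((E * ρ ^ n * |deriv (wordMap f lam w) x|) * d ^ ((β/4):ℝ)) := by
          apply mul_le_mul_of_nonneg_left _ (inv_nonneg.2 hEpos.le)
          exact mul_le_mul_of_nonneg_right h6 (Real.rpow_nonneg hd_pos.le _)
      _ = |deriv (wordMap f lam w) x| * (d ^ ((β/4):ℝ) * ρ ^ n) * (E⁻¹ * E) := by ring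
      _ = |deriv (wordMap f lam w) x| * (d ^ ((β/4):ℝ) * ρ ^ n) := by
          rw [inv_mul_cancel₀ (ne_of_gt hEpos), mul_one]
      _ ≤ |deriv (wordMap f lam w) x| * 1 := mul_le_mul_of_nonneg_left h3 (abs_nonneg _)
      _ = |deriv (wordMap f lam w) x| := mul_one _
  · -- upper bound
    have h1 : d ^ ((1:ℝ) - β/4) = d * d ^ (-(β/4) : ℝ) := by
      rw [show (1:ℝ) - β/4 = 1 + (-(β/4)) by ring, Real.rpow_add hd_pos, Real.rpow_one]
    have h2 : E ≤ (min E⁻¹ (1/2))⁻¹ := by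
      have hmin : 0 < min E⁻¹ (1/2) := lt_min (inv_pos.2 hEpos) (by norm_num)
      have hme : min E⁻¹ (1/2) * E ≤ 1 := by
        calc min E⁻¹ (1/2) * E ≤ E⁻¹ * E :=
              mul_le_mul_of_nonneg_right (min_le_left _ _) hEpos.le
          _ = 1 := inv_mul_cancel₀ (ne_of_gt hEpos)
      rw [← mul_le_mul_iff_of_pos_left hmin]
      calc min E⁻¹ (1/2) * E ≤ 1 := hme
        _ = min E⁻¹ (1/2) * (min E⁻¹ (1/2))⁻¹ := (mul_inv_cancel₀ (ne_of_gt hmin)).symm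
    calc |deriv (wordMap f lam w) x| ≤ d * (E * ρ ^ n) := hup
      _ ≤ d * (E * (γ₂ ^ n : ℝ) ^ (-(β/4) : ℝ)) := by
          apply mul_le_mul_of_nonneg_left _ hd_pos.le
          exact mul_le_mul_of_nonneg_left hrne hEpos.le
      _ ≤ d * (E * d ^ (-(β/4) : ℝ)) := by
          apply mul_le_mul_of_nonneg_left _ hd_pos.le
          exact mul_le_mul_of_nonneg_left hda hEpos.le
      _ = E * (d * d ^ (-(β/4) : ℝ)) := by ring
      _ = E * d ^ ((1:ℝ) - β/4) := by rw [h1]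
      _ ≤ (min E⁻¹ (1/2))⁻¹ * d ^ ((1:ℝ) - β/4) := by
          apply mul_le_mul_of_nonneg_right h2 (Real.rpow_nonneg hd_pos.le _)
end
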